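/- arXiv:1103.1650 — 5 statements merged into one kernel-verified Lean document; each statement's English description precedes it below -/
import Mathlib

section
/- Let μ be a probability measure with countable support on Homeo⁺(ℝ) that is symmetric and irreducible. Then every non-vanishing P-invariant Radon measure ν on the real line is bi-infinite, i.e. ν((x,∞)) = ∞ and ν((−∞,x)) = ∞ for every x ∈ ℝ. -/
/-!
Suppose `ν (Ioi x) < ∞`. Then the tail function `F t = ν [t, ∞)` is finite, and stationarity
together with the symmetry of `μ` makes it `μ`-harmonic: `F t = ∑ μ g * F (g t)`. Since `F` is
essentially the distribution function of `ν`, `ν {F < s} ≤ s`, so `exp (-F)` is `ν`-integrable.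
By strict convexity of `exp (-·)`, `exp (-F)` is subharmonic, with equality at `t` only if
`F (g t) = F t` for every `g` in the support of `μ`; integrating against the stationary `ν` forces
equality `ν`-a.e. As `F` is the tail function of `ν`, a.e. invariance upgrades to invariance
everywhere, hence under the whole group generated by the support. A level set `{F = c}` with
`c > 0` is then a nonempty invariant set bounded above, and its supremum is a global fixed point.
The left tail follows by conjugating with `t ↦ -t`.
-/

open scoped NNReal ENNReal
open MeasureTheory Filter Topology Set Function

noncomputable section

/-- The group `Homeo⁺(ℝ)` of orientation-preserving homeomorphisms of the real line,
modelled as the group of order-isomorphisms of `ℝ`: an orientation-preserving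
homeomorphism of `ℝ` is precisely a strictly increasing bijection of `ℝ`, i.e. an
order isomorphism (and every order isomorphism of `ℝ` is a homeomorphism). -/
abbrev H : Type := ℝ ≃o ℝ

open Real

-- The tangent line of `exp (-·)` at `m` lies strictly below the graph away from `m`, rearranged
-- so that no subtraction occurs and the inequality transfers to `ℝ≥0∞`.
theorem exp_neg_mul_one_add_lt {a m : ℝ} (hne : a ≠ m) :
    exp (-m) * (1 + m) < exp (-a) + exp (-m) * a := by
  have h : exp (-a) = exp (-m) * exp (m - a) := by rw [← exp_add]; ring_nf
  nlinarith [add_one_lt_exp (sub_ne_zero.2 hne.symm), exp_pos (-m)]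

theorem ENNReal.ofReal_exp_neg_mul_one_add_lt {a m : ℝ≥0} (hne : a ≠ m) :
    ENNReal.ofReal (exp (-m)) * (1 + m) <
      ENNReal.ofReal (exp (-a)) + ENNReal.ofReal (exp (-m)) * a := by
  have h := (ENNReal.ofReal_lt_ofReal_iff (by positivity)).2
    (exp_neg_mul_one_add_lt (NNReal.coe_injective.ne hne))
  rwa [ENNReal.ofReal_mul (exp_pos _).le, ENNReal.ofReal_add zero_le_one m.coe_nonneg,
    ENNReal.ofReal_one, ENNReal.ofReal_add (exp_pos _).le (by positivity),
    ENNReal.ofReal_mul (exp_pos _).le, ENNReal.ofReal_coe_nnreal, ENNReal.ofReal_coe_nnreal] at h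

theorem ENNReal.ofReal_exp_neg_mul_one_add_le (a m : ℝ≥0) :
    ENNReal.ofReal (exp (-m)) * (1 + m) ≤
      ENNReal.ofReal (exp (-a)) + ENNReal.ofReal (exp (-m)) * a := by
  rcases eq_or_ne a m with rfl | hne
  · rw [mul_add, mul_one]
  · exact (ENNReal.ofReal_exp_neg_mul_one_add_lt hne).le

section Jensen

variable {ι : Type*} {w : ι → ℝ≥0} {a : ι → ℝ≥0} {m : ℝ≥0}

theorem tsum_mul_ofReal_exp_neg_add_mul (hm : (m : ℝ≥0∞) = ∑' i, (w i : ℝ≥0∞) * a i) :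
    ∑' i, w i * (ENNReal.ofReal (exp (-(a i))) + ENNReal.ofReal (exp (-m)) * a i) =
      ∑' i, w i * ENNReal.ofReal (exp (-(a i))) + ENNReal.ofReal (exp (-m)) * m := by
  simp_rw [mul_add, ENNReal.tsum_add, mul_left_comm _ (ENNReal.ofReal _), ENNReal.tsum_mul_left,
    hm]

theorem tsum_mul_ofReal_exp_neg_mul_one_add (hw : ∑' i, (w i : ℝ≥0∞) = 1) :
    ∑' i, w i * (ENNReal.ofReal (exp (-m)) * (1 + m)) =
      ENNReal.ofReal (exp (-m)) + ENNReal.ofReal (exp (-m)) * m := by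
  rw [ENNReal.tsum_mul_right, hw, one_mul, mul_add, mul_one]

theorem ofReal_exp_neg_le_tsum (hw : ∑' i, (w i : ℝ≥0∞) = 1)
    (hm : (m : ℝ≥0∞) = ∑' i, (w i : ℝ≥0∞) * a i) :
    ENNReal.ofReal (exp (-m)) ≤ ∑' i, w i * ENNReal.ofReal (exp (-(a i))) := by
  have hfin : ENNReal.ofReal (exp (-m)) * m ≠ ∞ := by finiteness
  refine (ENNReal.add_le_add_iff_right hfin).1 ?_
  rw [← tsum_mul_ofReal_exp_neg_mul_one_add hw, ← tsum_mul_ofReal_exp_neg_add_mul hm]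
  gcongr with i
  exact ENNReal.ofReal_exp_neg_mul_one_add_le _ _

theorem eq_of_tsum_ofReal_exp_neg_eq (hw : ∑' i, (w i : ℝ≥0∞) = 1)
    (hm : (m : ℝ≥0∞) = ∑' i, (w i : ℝ≥0∞) * a i)
    (heq : ∑' i, w i * ENNReal.ofReal (exp (-(a i))) = ENNReal.ofReal (exp (-m)))
    {i : ι} (hi : w i ≠ 0) : a i = m := by
  by_contra hne
  have hlt := ENNReal.tsum_lt_tsum (i := i)
    (f := fun j => w j * (ENNReal.ofReal (exp (-m)) * (1 + m)))
    (g := fun j => w j * (ENNReal.ofReal (exp (-(a j))) + ENNReal.ofReal (exp (-m)) * a j))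
    (by rw [tsum_mul_ofReal_exp_neg_mul_one_add hw]; finiteness)
    (fun j => by gcongr; exact ENNReal.ofReal_exp_neg_mul_one_add_le (a j) m)
    (ENNReal.mul_lt_mul_right (by simpa using hi) ENNReal.coe_ne_top
      (ENNReal.ofReal_exp_neg_mul_one_add_lt hne))
  rw [tsum_mul_ofReal_exp_neg_mul_one_add hw, tsum_mul_ofReal_exp_neg_add_mul hm, heq] at hlt
  exact lt_irrefl _ hlt

end Jensen

theorem lintegral_ofReal_exp_neg_lt_top {X : Type*} [MeasurableSpace X] {ν : Measure X}
    {F : X → ℝ≥0} (hF : Measurable F) (hν : ∀ s : ℝ≥0, ν {x | F x < s} ≤ s) :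
    ∫⁻ x, ENNReal.ofReal (exp (-F x)) ∂ν < ∞ := by
  have hlevel : ∀ u ∈ Ioi (0 : ℝ),
      ν {x | u < exp (-F x)} ≤ (Iic 1).indicator (fun u => ENNReal.ofReal (-log u)) u := by
    intro u hu
    rcases le_or_gt u 1 with hu1 | hu1
    · rw [indicator_of_mem (mem_Iic.2 hu1)]
      refine le_trans (measure_mono fun x hx => ?_) (hν (-log u).toNNReal)
      have : (F x : ℝ) < -log u := by
        have := log_lt_log hu hx
        rw [log_exp] at this
        linarith
      exact Real.lt_toNNReal_iff_coe_lt.2 this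
    · refine (measure_mono_null (fun x hx => ?_) measure_empty).trans_le zero_le
      exact (exp_le_one_iff.2 (neg_nonpos.2 (F x).coe_nonneg)).not_gt (hu1.trans hx)
  calc ∫⁻ x, ENNReal.ofReal (exp (-F x)) ∂ν
      = ∫⁻ u in Ioi 0, ν {x | u < exp (-F x)} :=
        lintegral_eq_lintegral_meas_lt ν (ae_of_all _ fun x => (exp_pos _).le)
          (by fun_prop)
    _ ≤ ∫⁻ u in Ioi 0, (Iic 1).indicator (fun u => ENNReal.ofReal (-log u)) u :=
        setLIntegral_mono' measurableSet_Ioi hlevel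
    _ = ∫⁻ u in Ioc 0 1, ENNReal.ofReal (-log u) := by
        rw [lintegral_indicator measurableSet_Iic, Measure.restrict_restrict measurableSet_Iic,
          Iic_inter_Ioi]
    _ < ∞ := by
        have : IntegrableOn (fun u => -log u) (Ioc 0 1) := by
          simpa [intervalIntegrable_iff_integrableOn_Ioc_of_le zero_le_one] using
            (intervalIntegral.intervalIntegrable_log' (a := 0) (b := 1)).neg
        exact this.lintegral_lt_top

section Stationary

variable {X Γ : Type*} [MeasurableSpace X] {ν : Measure X} {μ : Γ → ℝ≥0} {T : Γ → X → X}

theorem tsum_subtype_support_mul (f : Γ → ℝ≥0∞) :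
    ∑' g : {g | μ g ≠ 0}, (μ g : ℝ≥0∞) * f g = ∑' g, (μ g : ℝ≥0∞) * f g :=
  tsum_subtype_eq_of_support_subset (f := fun g => (μ g : ℝ≥0∞) * f g) fun g hg h0 =>
    hg (by simp [h0])

theorem measurable_tsum_mul_comp (hcount : {g | μ g ≠ 0}.Countable) (hT : ∀ g, Measurable (T g))
    {f : X → ℝ≥0∞} (hf : Measurable f) : Measurable fun x => ∑' g, (μ g : ℝ≥0∞) * f (T g x) := by
  have := hcount.to_subtype
  have hsub := fun x => tsum_subtype_support_mul (μ := μ) fun g => f (T g x)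
  simp only [← hsub]
  exact .tsum fun g : {g | μ g ≠ 0} => (hf.comp (hT g)).const_mul _

theorem lintegral_tsum_mul_comp (hcount : {g | μ g ≠ 0}.Countable) (hT : ∀ g, Measurable (T g))
    (hinv : Measure.sum (fun g => (μ g : ℝ≥0∞) • ν.map (T g)) = ν)
    {f : X → ℝ≥0∞} (hf : Measurable f) :
    ∫⁻ x, ∑' g, (μ g : ℝ≥0∞) * f (T g x) ∂ν = ∫⁻ x, f x ∂ν := by
  have := hcount.to_subtype
  have hsub := fun x => tsum_subtype_support_mul (μ := μ) fun g => f (T g x)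
  calc ∫⁻ x, ∑' g, (μ g : ℝ≥0∞) * f (T g x) ∂ν
      = ∑' g : {g | μ g ≠ 0}, (μ g : ℝ≥0∞) * ∫⁻ x, f (T g x) ∂ν := by
        simp only [← hsub]
        rw [lintegral_tsum (f := fun (g : {g | μ g ≠ 0}) x => (μ g : ℝ≥0∞) * f (T g x))
          fun g => ((hf.comp (hT g)).const_mul _).aemeasurable]
        congr with g
        exact lintegral_const_mul _ (hf.comp (hT g))
    _ = ∫⁻ x, f x ∂(Measure.sum fun g => (μ g : ℝ≥0∞) • ν.map (T g)) := by
        rw [tsum_subtype_support_mul fun g => ∫⁻ x, f (T g x) ∂ν, lintegral_sum_measure]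
        congr with g
        rw [lintegral_smul_measure, lintegral_map hf (hT g), smul_eq_mul]
    _ = ∫⁻ x, f x ∂ν := by rw [hinv]

theorem ae_apply_eq_of_harmonic (hcount : {g | μ g ≠ 0}.Countable)
    (hprob : ∑' g, (μ g : ℝ≥0∞) = 1) (hT : ∀ g, Measurable (T g))
    (hinv : Measure.sum (fun g => (μ g : ℝ≥0∞) • ν.map (T g)) = ν)
    {F : X → ℝ≥0} (hF : Measurable F)
    (hharm : ∀ x, (F x : ℝ≥0∞) = ∑' g, (μ g : ℝ≥0∞) * F (T g x))
    (hint : ∫⁻ x, ENNReal.ofReal (exp (-F x)) ∂ν ≠ ∞) :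
    ∀ᵐ x ∂ν, ∀ g, μ g ≠ 0 → F (T g x) = F x := by
  set h : X → ℝ≥0∞ := fun x => ENNReal.ofReal (exp (-F x))
  have hh : Measurable h := by fun_prop
  have heq : h =ᵐ[ν] fun x => ∑' g, (μ g : ℝ≥0∞) * h (T g x) :=
    ae_eq_of_ae_le_of_lintegral_le
      (ae_of_all _ fun x => ofReal_exp_neg_le_tsum hprob (hharm x)) hint
      (measurable_tsum_mul_comp hcount hT hh).aemeasurable
      (lintegral_tsum_mul_comp hcount hT hinv hh).le
  filter_upwards [heq] with x hx g hg
  exact eq_of_tsum_ofReal_exp_neg_eq hprob (hharm x) hx.symm hg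

end Stationary

theorem measure_le_of_forall_measure_inter_Ici_le {α : Type*}
    [ConditionallyCompleteLinearOrder α] [TopologicalSpace α] [ClosedIicTopology α]
    [MeasurableSpace α] {ν : Measure α} [ν.InnerRegular] {Y : Set α} (hY : MeasurableSet Y)
    {c : ℝ≥0∞} (h : ∀ y ∈ Y, ν (Y ∩ Ici y) ≤ c) : ν Y ≤ c := by
  rw [hY.measure_eq_iSup_isCompact]
  refine iSup₂_le fun K hKY => iSup_le fun hK => ?_
  rcases K.eq_empty_or_nonempty with rfl | hne
  · simp
  calc ν K ≤ ν (Y ∩ Ici (sInf K)) :=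
        measure_mono fun k hk => ⟨hKY hk, csInf_le hK.bddBelow hk⟩
    _ ≤ c := h _ (hKY (hK.sInf_mem hne))

section TailMeasure

variable {ν : Measure ℝ}

theorem measure_Ici_ne_top [IsLocallyFiniteMeasure ν] {x : ℝ} (hx : ν (Ioi x) ≠ ∞) (t : ℝ) :
    ν (Ici t) ≠ ∞ := by
  refine ne_top_of_le_ne_top (ENNReal.add_ne_top.2 ⟨isCompact_Icc.measure_lt_top.ne, hx⟩)
    ((measure_mono fun y hy => ?_).trans (measure_union_le (Icc t x) (Ioi x)))
  exact (le_or_gt y x).imp (fun h => ⟨hy, h⟩) id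

theorem measure_Ici_eq_add {t u : ℝ} (h : t ≤ u) : ν (Ici t) = ν (Ico t u) + ν (Ici u) := by
  rw [← Ico_union_Ici_eq_Ici h,
    measure_union (disjoint_left.2 fun y hy hy' => hy.2.not_ge hy') measurableSet_Ici]

theorem measure_Ici_eq_iff {t u : ℝ} (hu : ν (Ici u) ≠ ∞) (h : t ≤ u) :
    ν (Ici t) = ν (Ici u) ↔ ν (Ico t u) = 0 := by
  rw [measure_Ici_eq_add h]
  nth_rewrite 2 [← zero_add (ν (Ici u))]
  exact ENNReal.add_left_inj hu

theorem measure_setOf_measure_Ici_lt_le [ν.InnerRegular] (c : ℝ≥0∞) :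
    ν {t | ν (Ici t) < c} ≤ c :=
  measure_le_of_forall_measure_inter_Ici_le
    (measurableSet_lt (Antitone.measurable fun _ _ h => measure_mono (Ici_subset_Ici.2 h))
      measurable_const)
    fun _ hy => (measure_mono inter_subset_right).trans hy.le

theorem measure_Ico_eq_zero_of_ae [ν.InnerRegular] {a b : ℝ}
    (h : ∀ᵐ t ∂ν, t ∈ Ico a b → ν (Ico t b) = 0) : ν (Ico a b) = 0 := by
  set S := {t | ν (Ico t b) = 0}
  have hS : MeasurableSet S :=
    (Antitone.measurable fun _ _ h => measure_mono (Ico_subset_Ico_left h))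
      (measurableSet_singleton 0)
  have hinter : ν (Ico a b ∩ S) = 0 :=
    nonpos_iff_eq_zero.1 <|
      measure_le_of_forall_measure_inter_Ici_le (measurableSet_Ico.inter hS) fun y hy =>
        (measure_mono fun t (ht : t ∈ Ico a b ∩ S ∩ Ici y) =>
          (⟨ht.2, ht.1.1.2⟩ : t ∈ Ico y b)).trans hy.2.le
  have hdiff : ν (Ico a b \ S) = 0 := by
    refine measure_mono_null (fun t ht => ?_) (ae_iff.1 h)
    exact fun h' => ht.2 (h' ht.1)
  simpa [hinter, hdiff] using measure_le_inter_add_sdiff ν (Ico a b) S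

theorem measure_Ici_apply_eq_of_ae_of_le [ν.InnerRegular] (hfin : ∀ t, ν (Ici t) ≠ ∞)
    {g : ℝ ≃o ℝ} (hg : ∀ᵐ t ∂ν, ν (Ici (g t)) = ν (Ici t)) {t : ℝ} (ht : t ≤ g t) :
    ν (Ici (g t)) = ν (Ici t) := by
  refine ((measure_Ici_eq_iff (hfin _) ht).2 (measure_Ico_eq_zero_of_ae ?_)).symm
  filter_upwards [hg] with t' ht' ⟨htt', ht'g⟩
  have hmono : g t ≤ g t' := g.monotone htt'
  exact measure_mono_null (Ico_subset_Ico_right hmono)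
    ((measure_Ici_eq_iff (hfin _) (ht'g.le.trans hmono)).1 ht'.symm)

-- `measure_Ici_apply_eq_of_ae_of_le` has no mirror image for `g t ≤ t` (a left endpoint may be an
-- atom), so that case goes through `g.symm`: this is where the symmetry of `μ` is needed.
theorem measure_Ici_apply_eq_of_ae [ν.InnerRegular] (hfin : ∀ t, ν (Ici t) ≠ ∞)
    {g : ℝ ≃o ℝ} (hg : ∀ᵐ t ∂ν, ν (Ici (g t)) = ν (Ici t))
    (hg' : ∀ᵐ t ∂ν, ν (Ici (g.symm t)) = ν (Ici t)) (t : ℝ) : ν (Ici (g t)) = ν (Ici t) := by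
  rcases le_total t (g t) with ht | ht
  · exact measure_Ici_apply_eq_of_ae_of_le hfin hg ht
  · have := measure_Ici_apply_eq_of_ae_of_le hfin hg' (t := g t)
      (by rwa [g.symm_apply_apply])
    rwa [g.symm_apply_apply, eq_comm] at this

theorem measure_Ici_eq_tsum_of_stationary {Γ : Type*} [Group Γ] (ρ : Γ →* ℝ ≃o ℝ)
    {μ : Γ → ℝ≥0} (hsymm : ∀ g, μ g = μ g⁻¹)
    (hinv : Measure.sum (fun g => (μ g : ℝ≥0∞) • ν.map (ρ g)) = ν) (t : ℝ) :
    ν (Ici t) = ∑' g, (μ g : ℝ≥0∞) * ν (Ici (ρ g t)) :=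
  calc ν (Ici t) = ∑' g, (μ g⁻¹ : ℝ≥0∞) * ν (Ici (ρ g⁻¹ t)) := by
        conv_lhs => rw [← hinv]
        rw [Measure.sum_apply _ measurableSet_Ici]
        congr with g
        rw [Measure.smul_apply, smul_eq_mul, ← hsymm,
          Measure.map_apply (ρ g).continuous.measurable measurableSet_Ici, OrderIso.preimage_Ici,
          map_inv]
        rfl
    _ = ∑' g, (μ g : ℝ≥0∞) * ν (Ici (ρ g t)) :=
        (Equiv.inv Γ).tsum_eq fun g => (μ g : ℝ≥0∞) * ν (Ici (ρ g t))

theorem tendsto_measure_Ici_atTop (hfin : ∃ t, ν (Ici t) ≠ ∞) :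
    Tendsto (fun t => ν (Ici t)) atTop (𝓝 0) := by
  have hempty : ⋂ t : ℝ, Ici t = ∅ := eq_empty_of_forall_notMem fun y hy =>
    (lt_add_one y).not_ge (mem_iInter.1 hy (y + 1))
  have h := tendsto_measure_iInter_atTop (fun t => measurableSet_Ici.nullMeasurableSet)
    (fun _ _ h => Ici_subset_Ici.2 h) hfin
  rwa [hempty, measure_empty] at h

theorem measure_Ici_apply_eq_of_stationary {Γ : Type*} [Group Γ] (ρ : Γ →* ℝ ≃o ℝ)
    {μ : Γ → ℝ≥0} (hcount : {g | μ g ≠ 0}.Countable) (hprob : ∑' g, (μ g : ℝ≥0∞) = 1)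
    (hsymm : ∀ g, μ g = μ g⁻¹) [ν.InnerRegular]
    (hinv : Measure.sum (fun g => (μ g : ℝ≥0∞) • ν.map (ρ g)) = ν)
    (hfin : ∀ t, ν (Ici t) ≠ ∞) {g : Γ} (hg : μ g ≠ 0) (t : ℝ) :
    ν (Ici (ρ g t)) = ν (Ici t) := by
  set F : ℝ → ℝ≥0 := fun t => (ν (Ici t)).toNNReal
  have hF : ∀ t, (F t : ℝ≥0∞) = ν (Ici t) := fun t => ENNReal.coe_toNNReal (hfin t)
  have hFmeas : Measurable F := Antitone.measurable fun a b h =>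
    ENNReal.toNNReal_mono (hfin a) (measure_mono (Ici_subset_Ici.2 h))
  have hae : ∀ᵐ t ∂ν, ∀ g, μ g ≠ 0 → F (ρ g t) = F t := by
    refine ae_apply_eq_of_harmonic hcount hprob (fun g => (ρ g).continuous.measurable) hinv
      hFmeas (fun t => ?_) (lintegral_ofReal_exp_neg_lt_top hFmeas fun s => ?_).ne
    · simpa only [hF] using measure_Ici_eq_tsum_of_stationary ρ hsymm hinv t
    · simpa only [← ENNReal.coe_lt_coe, hF] using measure_setOf_measure_Ici_lt_le (s : ℝ≥0∞)
  refine measure_Ici_apply_eq_of_ae hfin ?_ ?_ t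
  · filter_upwards [hae] with t ht
    rw [← hF, ← hF, ht g hg]
  · filter_upwards [hae] with t ht
    rw [← hF, ← hF, ← ht g⁻¹ (by rwa [← hsymm]), map_inv]
    rfl

end TailMeasure

theorem apply_eq_of_mem_closure {Γ α β : Type*} [Group Γ] [Preorder α] (ρ : Γ →* α ≃o α)
    {f : α → β} {S : Set Γ} (hS : ∀ g ∈ S, ∀ t, f (ρ g t) = f t) {k : Γ}
    (hk : k ∈ Subgroup.closure S) (t : α) : f (ρ k t) = f t := by
  induction hk using Subgroup.closure_induction generalizing t with
  | mem g hg => exact hS g hg t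
  | one => simp
  | mul a b _ _ ha hb => simp [ha, hb]
  | inv a _ ha => rw [← ha, map_inv]; simp

theorem exists_forall_orderIso_apply_eq {α β : Type*} [ConditionallyCompleteLinearOrder α]
    [TopologicalSpace β] [T1Space β] {f : α → β} {c : β} (hf : Tendsto f atTop (𝓝 c))
    {t₀ : α} (ht₀ : f t₀ ≠ c) : ∃ s, ∀ e : α ≃o α, (∀ t, f (e t) = f t) → e s = s := by
  set L := {t | f t = f t₀}
  obtain ⟨N, hN⟩ := eventually_atTop.1 (hf.eventually_ne ht₀.symm)
  have hL : BddAbove L := ⟨N, fun t ht => le_of_not_gt fun hNt => hN t hNt.le ht⟩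
  refine ⟨sSup L, fun e he => ?_⟩
  have hinvL : e '' L = L := by
    ext t
    rw [OrderIso.image_eq_preimage_symm, mem_preimage]
    show f (e.symm t) = f t₀ ↔ f t = f t₀
    rw [← he, e.apply_symm_apply]
  rw [e.map_csSup' (⟨t₀, rfl⟩ : L.Nonempty) hL, hinvL]

theorem measure_Ioi_eq_top_of_stationary {Γ : Type*} [Group Γ] (ρ : Γ →* ℝ ≃o ℝ)
    {μ : Γ → ℝ≥0} (hcount : {g | μ g ≠ 0}.Countable) (hprob : ∑' g, (μ g : ℝ≥0∞) = 1)
    (hsymm : ∀ g, μ g = μ g⁻¹) (hirr : ∀ x, ∃ g ∈ Subgroup.closure {g | μ g ≠ 0}, ρ g x ≠ x)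
    {ν : Measure ℝ} [IsLocallyFiniteMeasure ν] (hν : ν ≠ 0)
    (hinv : Measure.sum (fun g => (μ g : ℝ≥0∞) • ν.map (ρ g)) = ν) (x : ℝ) : ν (Ioi x) = ∞ := by
  by_contra hx
  have hfin := measure_Ici_ne_top hx
  obtain ⟨t₀, ht₀⟩ := ((tendsto_measure_Ici_atBot ν).eventually_ne
    (Measure.measure_univ_ne_zero.2 hν)).exists
  obtain ⟨s, hs⟩ := exists_forall_orderIso_apply_eq (tendsto_measure_Ici_atTop ⟨x, hfin x⟩) ht₀
  obtain ⟨k, hk, hks⟩ := hirr s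
  exact hks (hs _ (apply_eq_of_mem_closure ρ (f := fun t => ν (Ici t))
    (fun g hg => measure_Ici_apply_eq_of_stationary ρ hcount hprob hsymm hinv hfin hg) hk))

def negConj : (ℝ ≃o ℝ) →* (ℝ ≃o ℝ) where
  toFun g := (OrderIso.neg ℝ).trans (g.dual.trans (OrderIso.neg ℝ).symm)
  map_one' := by ext t; exact neg_neg t
  map_mul' a b := by
    ext t
    show -(a (b (-t))) = -(a (-(-(b (-t)))))
    rw [neg_neg]

theorem negConj_apply (g : ℝ ≃o ℝ) (t : ℝ) : negConj g t = -g (-t) := by rfl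

theorem measure_Iio_eq_top_of_stationary {Γ : Type*} [Group Γ] (ρ : Γ →* ℝ ≃o ℝ)
    {μ : Γ → ℝ≥0} (hcount : {g | μ g ≠ 0}.Countable) (hprob : ∑' g, (μ g : ℝ≥0∞) = 1)
    (hsymm : ∀ g, μ g = μ g⁻¹) (hirr : ∀ x, ∃ g ∈ Subgroup.closure {g | μ g ≠ 0}, ρ g x ≠ x)
    {ν : Measure ℝ} [IsLocallyFiniteMeasure ν] (hν : ν ≠ 0)
    (hinv : Measure.sum (fun g => (μ g : ℝ≥0∞) • ν.map (ρ g)) = ν) (x : ℝ) : ν (Iio x) = ∞ := by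
  have hirr' : ∀ x, ∃ g ∈ Subgroup.closure {g | μ g ≠ 0}, negConj (ρ g) x ≠ x := fun x => by
    obtain ⟨g, hg, hgx⟩ := hirr (-x)
    exact ⟨g, hg, fun h => hgx (by rwa [negConj_apply, neg_eq_iff_eq_neg] at h)⟩
  have hν' : ν.neg ≠ 0 := Measure.measure_univ_ne_zero.1 <| by
    rwa [Measure.neg_apply, neg_univ, Measure.measure_univ_ne_zero]
  have hinv' : Measure.sum (fun g => (μ g : ℝ≥0∞) • ν.neg.map (negConj (ρ g))) = ν.neg := by
    have hcomm : ∀ g, ν.neg.map (negConj (ρ g)) = (ν.map (ρ g)).neg := fun g => by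
      rw [Measure.neg, Measure.neg, Measure.map_map (negConj (ρ g)).continuous.measurable
        measurable_neg, Measure.map_map measurable_neg (ρ g).continuous.measurable]
      congr 1
      ext t
      simp [negConj_apply]
    conv_rhs => rw [← hinv]
    simp_rw [hcomm, Measure.neg, Measure.map_sum measurable_neg.aemeasurable, Measure.map_smul]
  have := measure_Ioi_eq_top_of_stationary (negConj.comp ρ) hcount hprob hsymm hirr' hν' hinv'
    (-x)
  rwa [Measure.neg_apply, neg_Ioi, neg_neg] at this

/-- Let μ be a symmetric, irreducible probability measure with countable
support on Homeo⁺(ℝ).  Then every non-vanishing P-invariant Radon measure ν on ℝ is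
bi-infinite: ν((x,∞)) = ∞ and ν((−∞,x)) = ∞ for every x ∈ ℝ. -/
theorem bi_infinite
    (μ : H → ℝ≥0)
    (hcount : {g : H | μ g ≠ 0}.Countable)
    (hprob : ∑' g : H, (μ g : ℝ≥0∞) = 1)
    (hsymm : ∀ g : H, μ g = μ g⁻¹)
    (hirr : ∀ x : ℝ, ∃ g ∈ Subgroup.closure {g : H | μ g ≠ 0}, g x ≠ x)
    (ν : Measure ℝ) [IsLocallyFiniteMeasure ν] (hν : ν ≠ 0)
    (hinv : Measure.sum (fun g : H => (μ g : ℝ≥0∞) • ν.map g) = ν) :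
    ∀ x : ℝ, ν (Set.Ioi x) = ∞ ∧ ν (Set.Iio x) = ∞ := fun x =>
  ⟨measure_Ioi_eq_top_of_stationary (MonoidHom.id H) hcount hprob hsymm hirr hν hinv x,
    measure_Iio_eq_top_of_stationary (MonoidHom.id H) hcount hprob hsymm hirr hν hinv x⟩
end
end

section
/- Let G be a finitely generated, irreducible group of orientation-preserving homeomorphisms of the real line. Then either G has a discrete orbit, or there is a unique nonempty closed G-invariant subset 𝓜 of ℝ that is minimal (contains no proper nonempty closed G-invariant subset), and in the latter case the closure of every G-orbit contains 𝓜. -/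
open scoped NNReal ENNReal
open MeasureTheory Filter Topology Set Function

noncomputable section

/-- The orbit of a point `x` under a subgroup `G` of Homeo⁺(ℝ). -/
def orbit (G : Subgroup H) (x : ℝ) : Set ℝ := {y : ℝ | ∃ g ∈ G, g x = y}

/-- A set `M ⊆ ℝ` is invariant under a subgroup `G` of Homeo⁺(ℝ). -/
def IsInvariantSet (G : Subgroup H) (M : Set ℝ) : Prop := ∀ g ∈ G, ∀ x ∈ M, g x ∈ M

/-- `M` is a nonempty closed `G`-invariant set containing no proper nonempty closed
`G`-invariant subset. -/
def IsMinimalSet (G : Subgroup H) (M : Set ℝ) : Prop :=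
  M.Nonempty ∧ IsClosed M ∧ IsInvariantSet G M ∧
    ∀ M' ⊆ M, M'.Nonempty → IsClosed M' → IsInvariantSet G M' → M' = M

/-!
Finite generation and irreducibility give finitely many elements of `G`, one of which moves any
given point to the right; hence every nonempty closed invariant set meets a fixed compact
interval, and Zorn's lemma produces a minimal set `M`. If `M` has an isolated point, its orbit
is discrete. Otherwise, let `C` be a nonempty closed invariant set disjoint from `M`, and send
each point of `C` to the largest point of `M` on its left. This map commutes with `G`, so its
image is dense in `M`; as `M` is perfect, that image accumulates at each of its points, and
between two nearby points of the image lies a point of `C`. So `C` meets `M` after all, and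
`M ⊆ C`.
-/

open scoped Pointwise

variable {G : Subgroup H} {C M : Set ℝ}

namespace IsInvariantSet

lemma image_eq (hC : IsInvariantSet G C) {g : H} (hg : g ∈ G) : g '' C = C :=
  (image_subset_iff.2 fun x hx => hC g hg x hx).antisymm fun x hx =>
    ⟨g⁻¹ x, hC g⁻¹ (inv_mem hg) x hx, g.apply_symm_apply x⟩

protected lemma closure (hC : IsInvariantSet G C) : IsInvariantSet G (closure C) :=
  fun g hg x hx => by
    simpa [hC.image_eq hg] using image_closure_subset_closure_image g.continuous ⟨x, hx, rfl⟩

protected lemma inter {D : Set ℝ} (hC : IsInvariantSet G C) (hD : IsInvariantSet G D) :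
    IsInvariantSet G (C ∩ D) :=
  fun g hg x hx => ⟨hC g hg x hx.1, hD g hg x hx.2⟩

protected lemma sInter {S : Set (Set ℝ)} (hS : ∀ C ∈ S, IsInvariantSet G C) :
    IsInvariantSet G (⋂₀ S) :=
  fun g hg x hx => mem_sInter.2 fun C hC => hS C hC g hg x (mem_sInter.1 hx C hC)

lemma not_bddBelow (hirr : ∀ x : ℝ, ∃ g ∈ G, g x ≠ x) (hC : IsInvariantSet G C)
    (hne : C.Nonempty) : ¬BddBelow C := fun hbdd => by
  obtain ⟨g, hg, hmoved⟩ := hirr (sInf C)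
  exact hmoved (by rw [g.map_csInf' hne hbdd, hC.image_eq hg])

end IsInvariantSet

lemma isInvariantSet_orbit (x : ℝ) : IsInvariantSet G (orbit G x) := by
  rintro g hg _ ⟨k, hk, rfl⟩
  exact ⟨g * k, mul_mem hg hk, rfl⟩

lemma mem_orbit_self (x : ℝ) : x ∈ orbit G x := ⟨1, one_mem G, rfl⟩

lemma orbit_subset {x : ℝ} (hC : IsInvariantSet G C) (hx : x ∈ C) : orbit G x ⊆ C := by
  rintro _ ⟨g, hg, rfl⟩
  exact hC g hg x hx

/-- The largest point of `M` below `x`; a junk value unless `M` is closed and unbounded below. -/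
def floorIn (M : Set ℝ) (x : ℝ) : ℝ := sSup (M ∩ Iic x)

lemma le_floorIn {x m : ℝ} (hm : m ∈ M) (hmx : m ≤ x) : m ≤ floorIn M x :=
  le_csSup (bddAbove_Iic.mono inter_subset_right) ⟨hm, hmx⟩

lemma floorIn_mem_inter (hM : IsClosed M) (hunb : ¬BddBelow M) (x : ℝ) :
    floorIn M x ∈ M ∩ Iic x := by
  obtain ⟨m, hm, hmx⟩ := not_bddBelow_iff.1 hunb x
  exact (hM.inter isClosed_Iic).csSup_mem ⟨m, hm, hmx.le⟩ (bddAbove_Iic.mono inter_subset_right)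

lemma image_floorIn_subset (hM : IsClosed M) (hunb : ¬BddBelow M) (C : Set ℝ) :
    floorIn M '' C ⊆ M := by
  rintro _ ⟨x, -, rfl⟩
  exact (floorIn_mem_inter hM hunb x).1

lemma OrderIso.map_floorIn (g : ℝ ≃o ℝ) (hgM : g '' M = M) (hunb : ¬BddBelow M) (x : ℝ) :
    g (floorIn M x) = floorIn M (g x) := by
  obtain ⟨m, hm, hmx⟩ := not_bddBelow_iff.1 hunb x
  unfold floorIn
  rw [g.map_csSup' (s := M ∩ Iic x) ⟨m, hm, hmx.le⟩ (bddAbove_Iic.mono inter_subset_right),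
    image_inter g.injective, hgM, g.image_Iic]

lemma exists_mem_Ioo_of_mem_image_floorIn (hM : IsClosed M) (hunb : ¬BddBelow M)
    (hCM : Disjoint C M) {e e' : ℝ} (he : e ∈ floorIn M '' C) (he' : e' ∈ M) (hlt : e < e') :
    ∃ x ∈ C, x ∈ Ioo e e' := by
  obtain ⟨x, hx, rfl⟩ := he
  obtain ⟨hxM, hxle⟩ := floorIn_mem_inter hM hunb x
  refine ⟨x, hx, hxle.lt_of_ne fun h => hCM.ne_of_mem hx hxM h.symm, ?_⟩
  exact lt_of_not_ge fun h => hlt.not_ge (le_floorIn he' h)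

lemma mem_closure_of_accPt_image_floorIn (hM : IsClosed M) (hunb : ¬BddBelow M)
    (hCM : Disjoint C M) {m : ℝ} (hm : AccPt m (𝓟 (floorIn M '' C))) : m ∈ closure C := by
  refine mem_closure_iff_nhds.2 fun U hU => ?_
  obtain ⟨a, b, hmab, hab⟩ := mem_nhds_iff_exists_Ioo_subset.1 hU
  obtain ⟨e, ⟨he, heE⟩, e', ⟨he', he'E⟩, hne⟩ :=
    (Set.Infinite.of_accPt (hm.nhds_inter (Ioo_mem_nhds hmab.1 hmab.2))).nontrivial
  wlog hlt : e < e' generalizing e e'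
  · exact this e' he' he'E e hne.symm he heE (hne.symm.lt_of_le (not_lt.1 hlt))
  obtain ⟨x, hxC, hx⟩ := exists_mem_Ioo_of_mem_image_floorIn hM hunb hCM heE
    (image_floorIn_subset hM hunb C he'E) hlt
  exact ⟨x, hab (Ioo_subset_Ioo he.1.le he'.2.le hx), hxC⟩

namespace IsMinimalSet

lemma subset_of_inter_nonempty (hM : IsMinimalSet G M) (hMC : (M ∩ C).Nonempty)
    (hC : IsClosed C) (hCinv : IsInvariantSet G C) : M ⊆ C := by
  rw [← hM.2.2.2 (M ∩ C) inter_subset_left hMC (hM.2.1.inter hC) (hM.2.2.1.inter hCinv)]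
  exact inter_subset_right

lemma eq_of_subset {N : Set ℝ} (hM : IsMinimalSet G M) (hN : IsMinimalSet G N) (hNM : N ⊆ M) :
    N = M :=
  hM.2.2.2 N hNM hN.1 hN.2.1 hN.2.2.1

lemma closure_eq {E : Set ℝ} (hM : IsMinimalSet G M) (hEM : E ⊆ M) (hE : E.Nonempty)
    (hEinv : IsInvariantSet G E) : closure E = M :=
  hM.2.2.2 _ (closure_minimal hEM hM.2.1) hE.closure isClosed_closure hEinv.closure

lemma subset_of_preperfect (hirr : ∀ x : ℝ, ∃ g ∈ G, g x ≠ x) (hM : IsMinimalSet G M)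
    (hperf : Preperfect M) (hCne : C.Nonempty) (hCcl : IsClosed C)
    (hCinv : IsInvariantSet G C) : M ⊆ C := by
  have ⟨hMne, hMcl, hMinv, _⟩ := hM
  have hunb := hMinv.not_bddBelow hirr hMne
  refine hM.subset_of_inter_nonempty (not_disjoint_iff_nonempty_inter.1 fun hMC => ?_) hCcl hCinv
  have hEinv : IsInvariantSet G (floorIn M '' C) := by
    rintro g hg _ ⟨x, hx, rfl⟩
    exact ⟨g x, hCinv g hg x hx, (g.map_floorIn (hMinv.image_eq hg) hunb x).symm⟩
  have hE : closure (floorIn M '' C) = M :=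
    hM.closure_eq (image_floorIn_subset hMcl hunb C) (hCne.image _) hEinv
  have hEperf : Preperfect (floorIn M '' C) :=
    preperfect_iff_perfect_closure.2 (by rw [hE]; exact ⟨hMcl, hperf⟩)
  obtain ⟨c, hc⟩ := hCne
  have hmem : floorIn M c ∈ C := hCcl.closure_subset <|
    mem_closure_of_accPt_image_floorIn hMcl hunb hMC.symm (hEperf _ (mem_image_of_mem _ hc))
  exact hMC.ne_of_mem (floorIn_mem_inter hMcl hunb c).1 hmem rfl

end IsMinimalSet

lemma exists_isMinimalSet_of_isCompact {K : Set ℝ} (hK : IsCompact K)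
    (hmeet : ∀ C : Set ℝ, C.Nonempty → IsClosed C → IsInvariantSet G C → (C ∩ K).Nonempty) :
    ∃ M, IsMinimalSet G M := by
  let S : Set (Set ℝ) := {C | C.Nonempty ∧ IsClosed C ∧ IsInvariantSet G C}
  have huniv : univ ∈ S := ⟨univ_nonempty, isClosed_univ, fun _ _ _ _ => trivial⟩
  refine (zorn_superset_nonempty S (fun c hc hchain hcne => ?_) univ huniv).imp
    fun M ⟨_, hM⟩ => ⟨hM.prop.1, hM.prop.2.1, hM.prop.2.2,
      fun M' hM' hne hcl hinv => hM.eq_of_subset ⟨hne, hcl, hinv⟩ hM'⟩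
  have : Nonempty c := hcne.to_subtype
  have hcK : (⋂ C : c, (C : Set ℝ) ∩ K).Nonempty :=
    IsCompact.nonempty_iInter_of_directed_nonempty_isCompact_isClosed _
      (fun A B => (hchain.total A.2 B.2).elim
        (fun h => ⟨A, subset_rfl, inter_subset_inter_left K h⟩)
        (fun h => ⟨B, inter_subset_inter_left K h, subset_rfl⟩))
      (fun C => hmeet C (hc C.2).1 (hc C.2).2.1 (hc C.2).2.2)
      (fun C => hK.inter_left (hc C.2).2.1) (fun C => (hc C.2).2.1.inter hK.isClosed)
  refine ⟨⋂₀ c, ⟨?_, isClosed_sInter fun C hC => (hc hC).2.1,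
    IsInvariantSet.sInter fun C hC => (hc hC).2.2⟩, fun C hC => sInter_subset_of_mem hC⟩
  exact hcK.mono fun x hx => mem_sInter.2 fun C hC => (mem_iInter.1 hx ⟨C, hC⟩).1

lemma exists_finite_forall_lt_apply (hfg : G.FG) (hirr : ∀ x : ℝ, ∃ g ∈ G, g x ≠ x) :
    ∃ T : Set H, T.Finite ∧ T ⊆ G ∧ ∀ x, ∃ t ∈ T, x < t x := by
  obtain ⟨S, hSG, hSfin⟩ := (Subgroup.fg_iff G).1 hfg
  have hS : S ⊆ G := hSG ▸ Subgroup.subset_closure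
  refine ⟨S ∪ S⁻¹, hSfin.union hSfin.inv, union_subset hS fun s hs => inv_mem_iff.1 (hS hs),
    fun x => ?_⟩
  by_contra! hle
  -- a generator `s` with `s x ≤ x` and `s⁻¹ x ≤ x` fixes `x`, hence so does all of `G`
  have hfix : G ≤ MulAction.stabilizer H x := hSG ▸ (Subgroup.closure_le _).2 fun s hs =>
    (hle s (.inl hs)).antisymm <| by
      simpa using s.monotone (hle s⁻¹ (.inr (by simpa using hs)))
  obtain ⟨g, hg, hmoved⟩ := hirr x
  exact hmoved (hfix hg)

lemma IsInvariantSet.inter_biUnion_Icc_nonempty (hirr : ∀ x : ℝ, ∃ g ∈ G, g x ≠ x)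
    {T : Set H} (hTG : T ⊆ G) (hT : ∀ x, ∃ t ∈ T, x < t x) (hCinv : IsInvariantSet G C)
    (hCne : C.Nonempty) (hCcl : IsClosed C) (y : ℝ) :
    (C ∩ ⋃ t ∈ T, Icc y (t y)).Nonempty := by
  obtain ⟨hcC, hcy⟩ := floorIn_mem_inter hCcl (hCinv.not_bddBelow hirr hCne) y
  obtain ⟨t, ht, hlt⟩ := hT (floorIn C y)
  have htc : t (floorIn C y) ∈ C := hCinv t (hTG ht) _ hcC
  have hyt : y < t (floorIn C y) := lt_of_not_ge fun h => hlt.not_ge (le_floorIn htc h)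
  exact ⟨_, htc, mem_biUnion ht ⟨hyt.le, t.monotone hcy⟩⟩

lemma exists_isMinimalSet (hfg : G.FG) (hirr : ∀ x : ℝ, ∃ g ∈ G, g x ≠ x) :
    ∃ M, IsMinimalSet G M := by
  obtain ⟨T, hTfin, hTG, hT⟩ := exists_finite_forall_lt_apply hfg hirr
  exact exists_isMinimalSet_of_isCompact (hTfin.isCompact_biUnion fun _ _ => isCompact_Icc)
    fun C hCne hCcl hCinv => hCinv.inter_biUnion_Icc_nonempty hirr hTG hT hCne hCcl 0

lemma discreteTopology_orbit_of_not_accPt (hMinv : IsInvariantSet G M) {m : ℝ} (hm : m ∈ M)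
    (hiso : ¬AccPt m (𝓟 M)) : DiscreteTopology (orbit G m) := by
  refine discreteTopology_of_noAccPts ?_
  rintro _ ⟨g, hg, rfl⟩ hacc
  have := (hacc.mono (principal_mono.2 (orbit_subset hMinv hm))).map
    g⁻¹.continuous.continuousAt g⁻¹.injective
  rw [map_principal, hMinv.image_eq (inv_mem hg), RelIso.inv_apply_self] at this
  exact hiso this

/-- A finitely generated irreducible group of orientation-preserving
homeomorphisms of ℝ either has a discrete orbit, or possesses a unique minimal nonempty
closed invariant set 𝓜, in which case the closure of every orbit contains 𝓜. -/
theorem discrete_orbit_or_unique_minimal_set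
    (G : Subgroup H) (hfg : G.FG)
    (hirr : ∀ x : ℝ, ∃ g ∈ G, g x ≠ x) :
    (∃ x : ℝ, DiscreteTopology ↥(orbit G x)) ∨
    (∃ M : Set ℝ, IsMinimalSet G M ∧ (∀ M' : Set ℝ, IsMinimalSet G M' → M' = M) ∧
      ∀ x : ℝ, M ⊆ closure (orbit G x)) := by
  obtain ⟨M, hM⟩ := exists_isMinimalSet hfg hirr
  by_cases hperf : Preperfect M
  · have hsub {C : Set ℝ} : C.Nonempty → IsClosed C → IsInvariantSet G C → M ⊆ C :=
      hM.subset_of_preperfect hirr hperf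
    refine .inr ⟨M, hM, fun M' hM' => ?_, fun x => ?_⟩
    · exact (hM'.eq_of_subset hM (hsub hM'.1 hM'.2.1 hM'.2.2.1)).symm
    · exact hsub ⟨x, subset_closure (mem_orbit_self x)⟩ isClosed_closure
        (isInvariantSet_orbit x).closure
  · obtain ⟨m, hm, hiso⟩ := not_forall₂.1 hperf
    exact .inl ⟨m, discreteTopology_orbit_of_not_accPt hM.2.2.1 hm hiso⟩
end
end

section
/- For any orientation-preserving homeomorphism g of the real line and any real numbers a < b, we have ∫_a^b [(g(x) − x) + (g⁻¹(x) − x)] dx = Φ_g(b) − Φ_g(a), where Φ_g(c) denotes the two-dimensional Lebesgue measure of the set {(x,y) ∈ ℝ² : x < c < y < g(x) or x < c < y < g⁻¹(x)}. -/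
open scoped NNReal ENNReal
open MeasureTheory Filter Topology Set Function

noncomputable section

/-- `Φ g c` is the two-dimensional Lebesgue measure of
`{(x,y) : x < c < y < g(x) or x < c < y < g⁻¹(x)}`. -/
def Phi (g : H) (c : ℝ) : ℝ≥0∞ :=
  volume {p : ℝ × ℝ | p.1 < c ∧ c < p.2 ∧ (p.2 < g p.1 ∨ p.2 < g.symm p.1)}

/-!
Write `M = max g g⁻¹` and `N = min g g⁻¹`. Since `N y < x ↔ y < M x`, the reflection
`(x, y) ↦ (y, x)` carries the region between the graph of `N` and the diagonal onto the region
`D = {x < y < M x}`. So `∫ₐᵇ (M x - x)` and `∫ₐᵇ (x - N x)` are the areas of the parts of `D` over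
a vertical, resp. horizontal, strip, and `Φ_g(c)` is the area of the part of `D` in the quadrant
`x < c < y`. As `(g - id) + (g⁻¹ - id) = (M - id) - (id - N)`, the theorem follows by cutting the
(bounded) part of `D` in `{x < b, a < y}` in two ways: along `x = a` into the vertical strip and the
quadrant at `a`, and along `y = b` into the horizontal strip and the quadrant at `b`.
-/

theorem ENNReal.toReal_ofReal_add {r : ℝ} {y : ℝ≥0∞} (hr : 0 ≤ r) (hy : y ≠ ⊤) :
    (ENNReal.ofReal r + y).toReal = r + y.toReal := by
  rw [ENNReal.toReal_add ENNReal.ofReal_ne_top hy, ENNReal.toReal_ofReal hr]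

namespace OrderIso

variable {α : Type*} [LinearOrder α] (g : α ≃o α)

def maxSymm (x : α) : α := max (g x) (g.symm x)

def minSymm (x : α) : α := min (g x) (g.symm x)

theorem minSymm_lt_iff_lt_maxSymm {x y : α} : g.minSymm y < x ↔ y < g.maxSymm x := by
  simp only [minSymm, maxSymm, min_lt_iff, lt_max_iff, ← g.lt_symm_apply,
    ← g.symm.lt_symm_apply, symm_symm]
  tauto

theorem le_maxSymm (x : α) : x ≤ g.maxSymm x := by
  rcases le_total x (g x) with h | h
  · exact le_max_of_le_left h
  · exact le_max_of_le_right (g.le_symm_apply.mpr h)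

theorem minSymm_le (x : α) : g.minSymm x ≤ x := by
  rcases le_total (g x) x with h | h
  · exact min_le_of_left_le h
  · exact min_le_of_right_le (g.symm_apply_le.mpr h)

theorem monotone_maxSymm : Monotone g.maxSymm := g.monotone.max g.symm.monotone

theorem continuous_maxSymm [TopologicalSpace α] [OrderTopology α] : Continuous g.maxSymm :=
  g.continuous.max g.symm.continuous

theorem continuous_minSymm [TopologicalSpace α] [OrderTopology α] : Continuous g.minSymm :=
  g.continuous.min g.symm.continuous

end OrderIso

section Straddle

variable {μ : Measure (ℝ × ℝ)} {A : Set (ℝ × ℝ)} {a b : ℝ}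

theorem measure_inter_prod_eq_add_fst (hA : MeasurableSet A) (hdiag : ∀ p ∈ A, p.1 < p.2)
    (hab : a ≤ b) :
    μ (A ∩ Iio b ×ˢ Ioi a) = μ (A ∩ Prod.fst ⁻¹' Ico a b) + μ (A ∩ Iio a ×ˢ Ioi a) := by
  have hset : A ∩ Iio b ×ˢ Ioi a = A ∩ Prod.fst ⁻¹' Ico a b ∪ A ∩ Iio a ×ˢ Ioi a := by
    ext p
    have := hdiag p
    simp only [mem_union, mem_inter_iff, mem_prod, mem_preimage, mem_Iio, mem_Ioi, mem_Ico]
    grind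
  rw [hset, measure_union _ (hA.inter (measurableSet_Iio.prod measurableSet_Ioi))]
  exact disjoint_left.mpr fun p ⟨_, h⟩ ⟨_, h', _⟩ => (h.1.not_gt h').elim

theorem measure_inter_prod_eq_add_snd (hA : MeasurableSet A) (hdiag : ∀ p ∈ A, p.1 < p.2)
    (hab : a ≤ b) :
    μ (A ∩ Iio b ×ˢ Ioi a) = μ (A ∩ Prod.snd ⁻¹' Ioc a b) + μ (A ∩ Iio b ×ˢ Ioi b) := by
  have hset : A ∩ Iio b ×ˢ Ioi a = A ∩ Prod.snd ⁻¹' Ioc a b ∪ A ∩ Iio b ×ˢ Ioi b := by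
    ext p
    have := hdiag p
    simp only [mem_union, mem_inter_iff, mem_prod, mem_preimage, mem_Iio, mem_Ioi, mem_Ioc]
    grind
  rw [hset, measure_union _ (hA.inter (measurableSet_Iio.prod measurableSet_Ioi))]
  exact disjoint_left.mpr fun p ⟨_, h⟩ ⟨_, _, h'⟩ => (h.2.not_gt h').elim

end Straddle

namespace OrderIso

variable (g : ℝ ≃o ℝ)

def displacementRegion : Set (ℝ × ℝ) := {p | p.1 < p.2 ∧ p.2 < g.maxSymm p.1}

theorem measurableSet_displacementRegion : MeasurableSet g.displacementRegion :=
  (measurableSet_lt measurable_fst measurable_snd).inter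
    (measurableSet_lt measurable_snd (g.continuous_maxSymm.measurable.comp measurable_fst))

theorem volume_displacementRegion_inter_fst_preimage {s : Set ℝ} (hs : MeasurableSet s)
    (hs_bdd : Bornology.IsBounded s) :
    volume (g.displacementRegion ∩ Prod.fst ⁻¹' s) =
      ENNReal.ofReal (∫ x in s, g.maxSymm x - x) := by
  have hset : g.displacementRegion ∩ Prod.fst ⁻¹' s = regionBetween id g.maxSymm s := by
    ext p
    simp only [displacementRegion, regionBetween, mem_inter_iff, mem_ofPred_eq, mem_preimage,
      mem_Ioo, id]
    tauto
  have hint {f : ℝ → ℝ} (hf : Continuous f) : IntegrableOn f s :=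
    (hf.continuousOn.integrableOn_compact hs_bdd.isCompact_closure).mono_set subset_closure
  rw [hset, Measure.volume_eq_prod, volume_regionBetween_eq_integral (hint continuous_id)
    (hint g.continuous_maxSymm) hs fun x _ => g.le_maxSymm x]
  rfl

theorem volume_displacementRegion_inter_snd_preimage {s : Set ℝ} (hs : MeasurableSet s)
    (hs_bdd : Bornology.IsBounded s) :
    volume (g.displacementRegion ∩ Prod.snd ⁻¹' s) =
      ENNReal.ofReal (∫ y in s, y - g.minSymm y) := by
  have hset : g.displacementRegion ∩ Prod.snd ⁻¹' s =
      Prod.swap ⁻¹' regionBetween g.minSymm id s := by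
    ext p
    simp only [displacementRegion, regionBetween, mem_inter_iff, mem_ofPred_eq, mem_preimage,
      mem_Ioo, id, Prod.fst_swap, Prod.snd_swap, g.minSymm_lt_iff_lt_maxSymm]
    tauto
  have hint {f : ℝ → ℝ} (hf : Continuous f) : IntegrableOn f s :=
    (hf.continuousOn.integrableOn_compact hs_bdd.isCompact_closure).mono_set subset_closure
  rw [hset, Measure.volume_eq_prod, Measure.measurePreserving_swap.measure_preimage
    (measurableSet_regionBetween g.continuous_minSymm.measurable measurable_id
      hs).nullMeasurableSet,
    volume_regionBetween_eq_integral (hint g.continuous_minSymm) (hint continuous_id) hs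
    fun x _ => g.minSymm_le x]
  rfl

theorem volume_displacementRegion_inter_prod_ne_top (a b : ℝ) :
    volume (g.displacementRegion ∩ Iio b ×ˢ Ioi a) ≠ ⊤ := by
  have hsub : g.displacementRegion ∩ Iio b ×ˢ Ioi a ⊆
      Icc (g.minSymm a) b ×ˢ Icc a (g.maxSymm b) := by
    rintro p ⟨⟨-, hpM⟩, hpb, hpa⟩
    exact ⟨⟨(g.minSymm_lt_iff_lt_maxSymm.mpr (hpa.trans hpM)).le, hpb.le⟩,
      hpa.le, hpM.le.trans (g.monotone_maxSymm hpb.le)⟩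
  exact ((measure_mono hsub).trans_lt (isCompact_Icc.prod isCompact_Icc).measure_lt_top).ne

end OrderIso

theorem Phi_eq_volume_displacementRegion_inter (g : H) (c : ℝ) :
    Phi g c = volume (g.displacementRegion ∩ Iio c ×ˢ Ioi c) := by
  rw [Phi]
  congr 1
  ext p
  simp only [OrderIso.displacementRegion, OrderIso.maxSymm, mem_inter_iff, mem_prod,
    mem_ofPred_eq, mem_Iio, mem_Ioi, lt_max_iff]
  grind

theorem integral_maxSymm_sub_add_Phi_eq (g : H) {a b : ℝ} (hab : a ≤ b) :
    (∫ x in Ico a b, g.maxSymm x - x) + (Phi g a).toReal =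
      (∫ y in Ioc a b, y - g.minSymm y) + (Phi g b).toReal := by
  have hfin := g.volume_displacementRegion_inter_prod_ne_top a b
  have hleft := measure_inter_prod_eq_add_fst (μ := volume) g.measurableSet_displacementRegion
    (fun _ hp => hp.1) hab
  have hright := measure_inter_prod_eq_add_snd (μ := volume) g.measurableSet_displacementRegion
    (fun _ hp => hp.1) hab
  rw [← Phi_eq_volume_displacementRegion_inter, g.volume_displacementRegion_inter_fst_preimage
    measurableSet_Ico (Metric.isBounded_Ico a b)] at hleft
  rw [← Phi_eq_volume_displacementRegion_inter, g.volume_displacementRegion_inter_snd_preimage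
    measurableSet_Ioc (Metric.isBounded_Ioc a b)] at hright
  rw [← ENNReal.toReal_ofReal_add, ← ENNReal.toReal_ofReal_add, ← hleft, ← hright]
  · exact setIntegral_nonneg measurableSet_Ioc fun y _ => sub_nonneg.2 (g.minSymm_le y)
  · exact (ENNReal.add_ne_top.mp (hright ▸ hfin)).2
  · exact setIntegral_nonneg measurableSet_Ico fun x _ => sub_nonneg.2 (g.le_maxSymm x)
  · exact (ENNReal.add_ne_top.mp (hleft ▸ hfin)).2

/-- For any orientation-preserving homeomorphism g of ℝ and any
a < b, one has ∫_a^b [(g(x) − x) + (g⁻¹(x) − x)] dx = Φ_g(b) − Φ_g(a). -/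
theorem integral_displacement_eq_Phi_sub
    (g : H) (a b : ℝ) (hab : a < b) :
    ∫ x in a..b, ((g x - x) + (g.symm x - x)) =
      (Phi g b).toReal - (Phi g a).toReal := by
  have hintegrand (x : ℝ) :
      (g x - x) + (g.symm x - x) = (g.maxSymm x - x) - (x - g.minSymm x) := by
    unfold OrderIso.maxSymm OrderIso.minSymm
    linarith [min_add_max (g x) (g.symm x)]
  have hM : Continuous fun x => g.maxSymm x - x := g.continuous_maxSymm.sub continuous_id
  have hN : Continuous fun x => x - g.minSymm x := continuous_id.sub g.continuous_minSymm
  simp_rw [hintegrand]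
  rw [intervalIntegral.integral_sub (hM.intervalIntegrable a b) (hN.intervalIntegrable a b),
    intervalIntegral.integral_of_le hab.le, intervalIntegral.integral_of_le hab.le,
    ← integral_Ico_eq_integral_Ioc]
  linarith [integral_maxSymm_sub_add_Phi_eq g hab.le]
end
end

section
/- Let μ be a finitely supported symmetric probability measure on Homeo⁺(ℝ) whose support generates a group G, and suppose the pair (G, μ) has the Derriennic property. Then every element g ∈ G is a Lipschitz map, and moreover for every g ∈ G the displacement function x ↦ g(x) − x is uniformly bounded, i.e. sup_{x∈ℝ} |g(x) − x| < ∞. In particular, each g₀ in the support of μ is Lipschitz with Lipschitz constant at most 1/μ(g₀). -/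
/-!
Writing `x = ∑ μ(h) h(x)` at two points gives `∑ μ(h) (h y - h x) = y - x`; all terms are
nonnegative, so `μ(g) (g y - g x) ≤ y - x`, which is the Lipschitz bound for `g`, and also says
that `u ↦ g u - μ(g) u` is monotone (apply it to `g⁻¹`, which has the same weight).

For the displacement, let `F_g(x) = ∫₀ˣ (g u - u) du`. The Derriennic property with `∑ μ = 1`
gives `∑ μ(g) F_g = 0`, and by symmetry `∑ μ(g) F_{g⁻¹} = 0`. Young's equality for `g` shows that
`F_{g⁻¹}(x) + F_g(g⁻¹ x) + (x - g⁻¹ x)² / 2` does not depend on `x`, while the monotonicity of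
`u ↦ g u - μ(g) u` gives `F_g(x) - F_g(g⁻¹ x) ≥ (1 + μ(g)) (x - g⁻¹ x)² / 2`. Summing against `μ`,
`∑ μ(g)² (x - g⁻¹ x)²` is bounded independently of `x`. Both properties pass to the generated
group because bi-Lipschitz maps and maps of bounded displacement form subgroups.
-/

open scoped NNReal ENNReal
open MeasureTheory Filter Topology Set Function

noncomputable section

open intervalIntegral

lemma eq_of_abs_sub_le_mul_sub {f m : ℝ → ℝ}
    (hf : ∀ c d, c ≤ d → |f d - f c| ≤ (d - c) * (m d - m c)) (a b : ℝ) : f a = f b := by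
  wlog hab : a ≤ b generalizing a b
  · exact (this b a (le_of_not_ge hab)).symm
  suffices h : ∀ n : ℕ, 0 < n → |f b - f a| ≤ (b - a) * (m b - m a) / n by
    have hle : |f b - f a| ≤ 0 :=
      ge_of_tendsto (tendsto_const_div_atTop_nhds_zero_nat _)
        ((eventually_gt_atTop 0).mono h)
    linarith [abs_nonpos_iff.1 hle]
  intro n hn
  -- Telescope along the uniform partition; the mesh factors out of the sum of increments of `m`.
  set δ := (b - a) / n
  set u : ℕ → ℝ := fun i => a + i * δ
  have hstep : ∀ i, u (i + 1) - u i = δ := fun i => by simp only [u]; push_cast; ring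
  have hu0 : u 0 = a := by simp [u]
  have hun : u n = b := by simp only [u, δ]; field_simp; ring
  calc |f b - f a| = |∑ i ∈ Finset.range n, (f (u (i + 1)) - f (u i))| := by
        rw [Finset.sum_range_sub (fun i => f (u i)), hu0, hun]
    _ ≤ ∑ i ∈ Finset.range n, δ * (m (u (i + 1)) - m (u i)) := by
        refine (Finset.abs_sum_le_sum_abs _ _).trans (Finset.sum_le_sum fun i _ => ?_)
        rw [← hstep i]
        exact hf _ _ (by linarith [hstep i, div_nonneg (sub_nonneg.2 hab) n.cast_nonneg])
    _ = (b - a) * (m b - m a) / n := by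
        rw [← Finset.mul_sum, Finset.sum_range_sub (fun i => m (u i)), hu0, hun]
        ring

lemma Monotone.mul_le_intervalIntegral {f : ℝ → ℝ} (hf : Monotone f) {c d : ℝ} (hcd : c ≤ d) :
    (d - c) * f c ≤ ∫ x in c..d, f x := by
  simpa using integral_mono_on (μ := volume) hcd intervalIntegrable_const hf.intervalIntegrable
    fun x hx => hf hx.1

lemma Monotone.intervalIntegral_le_mul {f : ℝ → ℝ} (hf : Monotone f) {c d : ℝ} (hcd : c ≤ d) :
    ∫ x in c..d, f x ≤ (d - c) * f d := by
  simpa using integral_mono_on (μ := volume) hcd hf.intervalIntegrable intervalIntegrable_const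
    fun x hx => hf hx.2

lemma Monotone.intervalIntegral_sub_nonneg {f : ℝ → ℝ} (hf : Monotone f) (a b : ℝ) :
    0 ≤ ∫ x in a..b, (f x - f a) := by
  rcases le_total a b with hab | hba
  · exact integral_nonneg hab fun x hx => sub_nonneg.2 (hf hx.1)
  · rw [integral_symm, ← intervalIntegral.integral_neg]
    exact integral_nonneg hba fun x hx => neg_nonneg.2 (sub_nonpos.2 (hf hx.2))

namespace OrderIso

theorem intervalIntegral_add_intervalIntegral_symm (g : ℝ ≃o ℝ) (a b : ℝ) :
    (∫ x in a..b, g x) + (∫ y in g a..g b, g.symm y) = b * g b - a * g a := by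
  have hint : ∀ c d, IntervalIntegrable g volume c d := fun _ _ => g.monotone.intervalIntegrable
  have hint' : ∀ c d, IntervalIntegrable g.symm volume c d :=
    fun _ _ => g.symm.monotone.intervalIntegrable
  set φ : ℝ → ℝ := fun x => (∫ t in 0..x, g t) + (∫ y in g 0..g x, g.symm y) - x * g x
  have hφ : ∀ c d, φ d - φ c =
      (∫ x in c..d, g x) + (∫ y in g c..g d, g.symm y) - (d * g d - c * g c) := fun c d => by
    simp only [φ, ← integral_interval_sub_left (hint 0 d) (hint 0 c),
      ← integral_interval_sub_left (hint' (g 0) (g d)) (hint' (g 0) (g c))]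
    ring
  have hcell : ∀ c d, c ≤ d → |φ d - φ c| ≤ (d - c) * (g d - g c) := fun c d hcd => by
    have hgcd : g c ≤ g d := g.monotone hcd
    have h1 := g.monotone.mul_le_intervalIntegral hcd
    have h2 := g.monotone.intervalIntegral_le_mul hcd
    have h3 := g.symm.monotone.mul_le_intervalIntegral hgcd
    have h4 := g.symm.monotone.intervalIntegral_le_mul hgcd
    simp only [symm_apply_apply] at h3 h4
    rw [hφ, abs_le]
    constructor <;> nlinarith
  have := hφ a b
  rw [eq_of_abs_sub_le_mul_sub hcell a b, sub_self] at this
  linarith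

end OrderIso

def integratedDisplacement (g : H) (x : ℝ) : ℝ := ∫ u in 0..x, (g u - u)

lemma integratedDisplacement_eq (g : H) (x : ℝ) :
    integratedDisplacement g x = (∫ u in 0..x, g u) - x ^ 2 / 2 := by
  rw [integratedDisplacement, integral_sub g.monotone.intervalIntegrable intervalIntegrable_id,
    integral_id]
  ring

lemma integratedDisplacement_sub (g : H) (a b : ℝ) :
    integratedDisplacement g b - integratedDisplacement g a = ∫ u in a..b, (g u - u) :=
  integral_interval_sub_left ((g.continuous.sub continuous_id).intervalIntegrable _ _)
    ((g.continuous.sub continuous_id).intervalIntegrable _ _)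

theorem integratedDisplacement_symm_add (g : H) (x : ℝ) :
    integratedDisplacement g.symm x + integratedDisplacement g (g.symm x) + (x - g.symm x) ^ 2 / 2 =
      ∫ y in 0..g 0, g.symm y := by
  have hyoung := g.intervalIntegral_add_intervalIntegral_symm 0 (g.symm x)
  rw [OrderIso.apply_symm_apply] at hyoung
  have hsplit := integral_add_adjacent_intervals (μ := volume) (a := 0) (b := g 0) (c := x)
    g.symm.monotone.intervalIntegrable g.symm.monotone.intervalIntegrable
  rw [integratedDisplacement_eq, integratedDisplacement_eq]
  linear_combination hyoung - hsplit

lemma mul_sq_le_integratedDisplacement_sub (g : H) {c : ℝ} (hg : Monotone fun u => g u - c * u)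
    (x : ℝ) :
    (1 + c) * (x - g.symm x) ^ 2 / 2 ≤
      integratedDisplacement g x - integratedDisplacement g (g.symm x) := by
  set y := g.symm x
  have hgy : g y = x := g.apply_symm_apply x
  have hmono := hg.intervalIntegral_sub_nonneg y x
  have hint : IntervalIntegrable (fun u => g u - c * u) volume y x := hg.intervalIntegrable
  rw [integral_sub hint intervalIntegrable_const, integral_sub g.monotone.intervalIntegrable
    (intervalIntegrable_id.const_mul c), intervalIntegral.integral_const_mul, integral_id,
    intervalIntegral.integral_const, smul_eq_mul, hgy] at hmono
  rw [integratedDisplacement_sub, integral_sub g.monotone.intervalIntegrable intervalIntegrable_id,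
    integral_id]
  nlinarith

def HasDerriennicProperty (s : Finset H) (μ : H → ℝ≥0) : Prop :=
  ∀ x : ℝ, ∑ g ∈ s, (μ g : ℝ) * g x = x

namespace HasDerriennicProperty

variable {s : Finset H} {μ : H → ℝ≥0}

lemma sum_mul_sub (h : HasDerriennicProperty s μ) (x y : ℝ) :
    ∑ g ∈ s, (μ g : ℝ) * (g y - g x) = y - x := by
  simp only [mul_sub, Finset.sum_sub_distrib, h x, h y]

lemma monotone_sub_mul (h : HasDerriennicProperty s μ) {g : H} (hg : g ∈ s) :
    Monotone fun x => x - μ g * g x := fun x y hxy => by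
  have := Finset.single_le_sum (f := fun k : H => (μ k : ℝ) * (k y - k x))
    (fun k _ => mul_nonneg (μ k).coe_nonneg (sub_nonneg.2 (k.monotone hxy))) hg
  rw [h.sum_mul_sub] at this
  linarith

lemma lipschitzWith (h : HasDerriennicProperty s μ) {g : H} (hg : g ∈ s) (h0 : μ g ≠ 0) :
    LipschitzWith (μ g)⁻¹ g := by
  have hpos : (0 : ℝ) < μ g := by positivity
  refine LipschitzWith.of_le_add_mul _ fun x y => ?_
  rw [Real.dist_eq, NNReal.coe_inv, ← div_eq_inv_mul]
  rcases le_total x y with hxy | hyx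
  · linarith [g.monotone hxy, div_nonneg (abs_nonneg (x - y)) hpos.le]
  · have hlip : μ g * (g x - g y) ≤ x - y := by linarith [h.monotone_sub_mul hg hyx]
    rw [abs_of_nonneg (sub_nonneg.2 hyx), ← sub_le_iff_le_add', le_div_iff₀' hpos]
    exact hlip

lemma sum_mul_integratedDisplacement (h : HasDerriennicProperty s μ)
    (hsum : ∑ g ∈ s, (μ g : ℝ) = 1) (x : ℝ) :
    ∑ g ∈ s, (μ g : ℝ) * integratedDisplacement g x = 0 := by
  have hmean : ∀ u, ∑ g ∈ s, (μ g : ℝ) * (g u - u) = 0 := fun u => by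
    simp only [mul_sub, Finset.sum_sub_distrib, h u, ← Finset.sum_mul, hsum, one_mul, sub_self]
  simp only [integratedDisplacement, ← intervalIntegral.integral_const_mul]
  rw [← integral_finsetSum fun g _ =>
    ((g.continuous.sub continuous_id).intervalIntegrable _ _).const_mul _]
  simp only [hmean, intervalIntegral.integral_zero]

lemma sum_mul_integratedDisplacement_symm (h : HasDerriennicProperty s μ)
    (hsum : ∑ g ∈ s, (μ g : ℝ) = 1) (hinv : ∀ g, g⁻¹ ∈ s ↔ g ∈ s) (hsymm : ∀ g, μ g = μ g⁻¹)
    (x : ℝ) : ∑ g ∈ s, (μ g : ℝ) * integratedDisplacement g.symm x = 0 := by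
  rw [← h.sum_mul_integratedDisplacement hsum x]
  exact Finset.sum_equiv (Equiv.inv H) (fun g => (hinv g).symm) fun g _ => by
    rw [hsymm g]; rfl

lemma sum_mul_integratedDisplacement_sub_symm (h : HasDerriennicProperty s μ)
    (hsum : ∑ g ∈ s, (μ g : ℝ) = 1) (hinv : ∀ g, g⁻¹ ∈ s ↔ g ∈ s) (hsymm : ∀ g, μ g = μ g⁻¹)
    (x : ℝ) :
    ∑ g ∈ s, (μ g : ℝ) * (integratedDisplacement g x - integratedDisplacement g (g.symm x)) =
      ∑ g ∈ s, (μ g : ℝ) * (x - g.symm x) ^ 2 / 2 -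
        ∑ g ∈ s, (μ g : ℝ) * ∫ y in 0..g 0, g.symm y := by
  have hsplit : ∀ g ∈ s, (μ g : ℝ) * (integratedDisplacement g x -
      integratedDisplacement g (g.symm x)) = μ g * integratedDisplacement g x +
      μ g * integratedDisplacement g.symm x + μ g * (x - g.symm x) ^ 2 / 2 -
      μ g * ∫ y in 0..g 0, g.symm y := fun g _ => by
    linear_combination -(μ g : ℝ) * integratedDisplacement_symm_add g x
  rw [Finset.sum_congr rfl hsplit]
  simp only [Finset.sum_sub_distrib, Finset.sum_add_distrib, h.sum_mul_integratedDisplacement hsum,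
    h.sum_mul_integratedDisplacement_symm hsum hinv hsymm, zero_add]

theorem exists_forall_mul_sq_le (h : HasDerriennicProperty s μ)
    (hsum : ∑ g ∈ s, (μ g : ℝ) = 1) (hinv : ∀ g, g⁻¹ ∈ s ↔ g ∈ s) (hsymm : ∀ g, μ g = μ g⁻¹) :
    ∃ C, ∀ g ∈ s, ∀ x, (μ g : ℝ) ^ 2 * (x - g.symm x) ^ 2 ≤ C := by
  refine ⟨-2 * ∑ g ∈ s, (μ g : ℝ) * ∫ y in 0..g 0, g.symm y, fun g₀ hg₀ x => ?_⟩
  have hlower : ∑ g ∈ s, (μ g : ℝ) * ((1 + μ g) * (x - g.symm x) ^ 2 / 2) ≤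
      ∑ g ∈ s, μ g * (integratedDisplacement g x - integratedDisplacement g (g.symm x)) := by
    refine Finset.sum_le_sum fun g hg => mul_le_mul_of_nonneg_left
      (mul_sq_le_integratedDisplacement_sub g ?_ x) (μ g).coe_nonneg
    simpa [comp_def, ← hsymm g] using (h.monotone_sub_mul ((hinv g).2 hg)).comp g.monotone
  rw [h.sum_mul_integratedDisplacement_sub_symm hsum hinv hsymm] at hlower
  have hterm := Finset.single_le_sum (f := fun g : H => (μ g : ℝ) ^ 2 * (x - g.symm x) ^ 2)
    (fun g _ => by positivity) hg₀
  have hsq : ∑ g ∈ s, (μ g : ℝ) ^ 2 * (x - g.symm x) ^ 2 =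
      2 * ∑ g ∈ s, (μ g : ℝ) * ((1 + μ g) * (x - g.symm x) ^ 2 / 2) -
      2 * ∑ g ∈ s, (μ g : ℝ) * (x - g.symm x) ^ 2 / 2 := by
    rw [Finset.mul_sum, Finset.mul_sum, ← Finset.sum_sub_distrib]
    exact Finset.sum_congr rfl fun g _ => by ring
  linarith

lemma exists_abs_sub_le (h : HasDerriennicProperty s μ) (hsum : ∑ g ∈ s, (μ g : ℝ) = 1)
    (hinv : ∀ g, g⁻¹ ∈ s ↔ g ∈ s) (hsymm : ∀ g, μ g = μ g⁻¹) {g : H} (hg : g ∈ s)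
    (h0 : μ g ≠ 0) : ∃ M, ∀ x, |g x - x| ≤ M := by
  obtain ⟨C, hC⟩ := h.exists_forall_mul_sq_le hsum hinv hsymm
  have hpos : (0 : ℝ) < μ g := by positivity
  refine ⟨√(C / (μ g : ℝ) ^ 2), fun x => Real.abs_le_sqrt ?_⟩
  have := hC g⁻¹ ((hinv g).2 hg) x
  rw [← hsymm] at this
  rw [le_div_iff₀ (by positivity)]
  change _ * (x - g x) ^ 2 ≤ C at this
  nlinarith

end HasDerriennicProperty

def biLipschitzSubgroup : Subgroup H where
  carrier := {g | (∃ C, LipschitzWith C g) ∧ ∃ C, LipschitzWith C g.symm}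
  one_mem' := ⟨⟨1, LipschitzWith.id⟩, ⟨1, LipschitzWith.id⟩⟩
  mul_mem' := fun ⟨⟨C₁, h₁⟩, ⟨C₁', h₁'⟩⟩ ⟨⟨C₂, h₂⟩, ⟨C₂', h₂'⟩⟩ =>
    ⟨⟨C₁ * C₂, h₁.comp h₂⟩, ⟨C₂' * C₁', h₂'.comp h₁'⟩⟩
  inv_mem' := fun ⟨hg, hg'⟩ => ⟨hg', hg⟩

def boundedDisplacementSubgroup : Subgroup H where
  carrier := {g | ∃ M, ∀ x, |g x - x| ≤ M}
  one_mem' := ⟨0, fun x => by simp⟩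
  mul_mem' := fun {g k} ⟨M, hM⟩ ⟨N, hN⟩ => ⟨M + N, fun x =>
    (abs_sub_le (g (k x)) (k x) x).trans (add_le_add (hM (k x)) (hN x))⟩
  inv_mem' := fun {g} ⟨M, hM⟩ => ⟨M, fun x => by
    have := hM (g.symm x)
    rwa [g.apply_symm_apply, abs_sub_comm] at this⟩

/-- If the pair (G, μ) has the Derriennic property, then every
element of G is Lipschitz with uniformly bounded displacement; in particular every g₀
in the support of μ is Lipschitz with constant at most 1/μ(g₀). -/
theorem derriennic_implies_lipschitz_and_bounded_displacement
    (μ : H → ℝ≥0)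
    (hfin : {g : H | μ g ≠ 0}.Finite)
    (hprob : ∑' g : H, (μ g : ℝ≥0∞) = 1)
    (hsymm : ∀ g : H, μ g = μ g⁻¹)
    (hder : ∀ x : ℝ, (∑ᶠ g : H, (μ g : ℝ) * g x) = x) :
    (∀ g ∈ Subgroup.closure {g : H | μ g ≠ 0},
      (∃ C : ℝ≥0, LipschitzWith C ⇑g) ∧ ∃ M : ℝ, ∀ x : ℝ, |g x - x| ≤ M) ∧
    ∀ g₀ : H, μ g₀ ≠ 0 → LipschitzWith (μ g₀)⁻¹ ⇑g₀ := by
  set s := hfin.toFinset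
  have hs : ∀ g, g ∈ s ↔ μ g ≠ 0 := fun g => hfin.mem_toFinset
  have hinv : ∀ g, g⁻¹ ∈ s ↔ g ∈ s := fun g => by rw [hs, hs, hsymm g]
  have hsum : ∑ g ∈ s, (μ g : ℝ) = 1 := by
    rw [tsum_eq_sum fun g hg => by simpa using (hs g).not.1 hg] at hprob
    exact_mod_cast hprob
  have hD : HasDerriennicProperty s μ := fun x => by
    rw [← finsum_eq_sum_of_support_subset (fun g : H => (μ g : ℝ) * g x)
      fun g hg => (hs g).2 (by exact_mod_cast left_ne_zero_of_mul hg)]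
    exact hder x
  have hLip : ∀ g₀ : H, μ g₀ ≠ 0 → LipschitzWith (μ g₀)⁻¹ ⇑g₀ :=
    fun g hg => hD.lipschitzWith ((hs g).2 hg) hg
  have hle : Subgroup.closure {g : H | μ g ≠ 0} ≤
      biLipschitzSubgroup ⊓ boundedDisplacementSubgroup :=
    (Subgroup.closure_le _).2 fun g hg => ⟨⟨⟨_, hLip g hg⟩, ⟨_, hLip g⁻¹ (hsymm g ▸ hg)⟩⟩,
      hD.exists_abs_sub_le hsum hinv hsymm ((hs g).2 hg) hg⟩
  exact ⟨fun g hg => ⟨(hle hg).1.1, (hle hg).2⟩, hLip⟩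
end
end

section
/- Let G be an irreducible, finitely generated subgroup of Homeo⁺(ℝ). Then there exists a homeomorphism D : ℝ → ℝ such that for every g ∈ G, the map D ∘ g ∘ D⁻¹ is Lipschitz and has uniformly bounded displacement, i.e. sup_{x∈ℝ} |D(g(D⁻¹(x))) − x| < ∞. -/
/-!
Let `T = S ∪ S⁻¹` for a finite generating set `S`. By irreducibility every point is moved to the
right by some `t ∈ T`, so `M x = max_{t ∈ T} t x` is a homeomorphism with `M x > x`; interpolating
linearly along an `M`-orbit gives coordinates in which `M`, and hence every `t ∈ T`, moves points by
at most `2`. For a finite family of homeomorphisms with bounded displacement, the map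
`D x = ∑_w r^|w| w(x)`, summed over all words `w` in the family with `r < 1 / #T`, is a
homeomorphism, expanding because of the empty word. Since the words `w t` form a subfamily of all
words, `D t D⁻¹` is `r⁻¹`-Lipschitz, and since words of length `n` move points by `O(n)`, it has
bounded displacement. Both properties are preserved by composition, hence hold on all of `G`.
-/

open scoped NNReal ENNReal
open MeasureTheory Filter Topology Set Function

noncomputable section

lemma OrderIso.zpow_add_one_apply {α : Type*} [LinearOrder α] (M : α ≃o α) (n : ℤ) (x : α) :
    (M ^ (n + 1)) x = M ((M ^ n) x) := by
  rw [add_comm, zpow_one_add]; rfl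

lemma OrderIso.strictMono_zpow_apply {α : Type*} [LinearOrder α] {M : α ≃o α} (hM : ∀ x, x < M x)
    (x : α) :
    StrictMono fun n : ℤ => (M ^ n) x :=
  strictMono_int_of_lt_succ fun n => (M.zpow_add_one_apply n x).symm ▸ hM _

lemma OrderIso.tendsto_zpow_apply {α : Type*} [ConditionallyCompleteLinearOrder α]
    [TopologicalSpace α] [OrderTopology α] {M : α ≃o α} (hM : ∀ x, x < M x) (x : α) :
    Tendsto (fun n : ℤ => (M ^ n) x) atTop atTop ∧
      Tendsto (fun n : ℤ => (M ^ n) x) atBot atBot := by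
  have ha_mono := (M.strictMono_zpow_apply hM x).monotone
  -- a limit of the orbit along `l` would be a fixed point of `M`
  have not_tendsto_nhds {l : Filter ℤ} [l.NeBot] (hl : Tendsto (· + 1) l l) (y : α) :
      ¬ Tendsto (fun n : ℤ => (M ^ n) x) l (𝓝 y) := fun hy =>
    (hM y).ne' <| tendsto_nhds_unique
      (((M.continuous.tendsto y).comp hy).congr fun n => (M.zpow_add_one_apply n x).symm)
      (hy.comp hl)
  refine ⟨(tendsto_atTop_of_monotone ha_mono).resolve_right ?_,
    (tendsto_atBot_of_monotone ha_mono).resolve_right ?_⟩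
  · exact fun ⟨y, hy⟩ => not_tendsto_nhds (tendsto_atTop_add_const_right _ 1 tendsto_id) y hy
  · exact fun ⟨y, hy⟩ => not_tendsto_nhds (tendsto_atBot_add_const_right _ 1 tendsto_id) y hy

lemma exists_mem_Ico_of_tendsto {a : ℤ → ℝ} (htop : Tendsto a atTop atTop)
    (hbot : Tendsto a atBot atBot) (x : ℝ) : ∃ n, x ∈ Ico (a n) (a (n + 1)) := by
  obtain ⟨n₀, hn₀⟩ := (htop.eventually_gt_atTop x).exists_forall_of_atTop
  obtain ⟨n, hn, hmax⟩ := Int.exists_greatest_of_bdd (P := fun n => a n ≤ x)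
    ⟨n₀, fun n hn => not_lt.mp fun h => (hn₀ n h.le).not_ge hn⟩ (hbot.eventually_le_atBot x).exists
  exact ⟨n, hn, not_le.mp fun h => (hmax _ h).not_gt (lt_add_one n)⟩

lemma exists_orderIso_intCast_eq {a : ℤ → ℝ} (ha : StrictMono a) (htop : Tendsto a atTop atTop)
    (hbot : Tendsto a atBot atBot) : ∃ σ : ℝ ≃o ℝ, ∀ n : ℤ, σ n = a n := by
  set σ : ℝ → ℝ := fun t => a ⌊t⌋ + Int.fract t * (a (⌊t⌋ + 1) - a ⌊t⌋)
  have hgap : ∀ n, 0 < a (n + 1) - a n := fun n => sub_pos.mpr (ha (lt_add_one n))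
  have hσ_lt : ∀ t, σ t < a (⌊t⌋ + 1) := fun t => by
    nlinarith [Int.fract_lt_one t, hgap ⌊t⌋]
  have hσ_ge : ∀ t, a ⌊t⌋ ≤ σ t := fun t => by
    nlinarith [Int.fract_nonneg t, hgap ⌊t⌋]
  have hmono : StrictMono σ := by
    intro s t hst
    rcases (Int.floor_mono hst.le).eq_or_lt with heq | hlt
    · have : Int.fract s < Int.fract t := by
        simp only [Int.fract, heq]; linarith
      simp only [σ, heq]
      nlinarith [hgap ⌊t⌋]
    · calc σ s < a (⌊s⌋ + 1) := hσ_lt s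
        _ ≤ a ⌊t⌋ := ha.monotone (Int.add_one_le_iff.mpr hlt)
        _ ≤ σ t := hσ_ge t
  have hsurj : Surjective σ := by
    intro x
    obtain ⟨n, hnx, hxn⟩ := exists_mem_Ico_of_tendsto htop hbot x
    set q := (x - a n) / (a (n + 1) - a n) with hq_def
    have hq : q ∈ Ico (0 : ℝ) 1 :=
      ⟨div_nonneg (sub_nonneg.mpr hnx) (hgap n).le, (div_lt_one (hgap n)).mpr (by linarith)⟩
    have hfloor : ⌊(n + q : ℝ)⌋ = n := by
      rw [Int.floor_eq_iff]; constructor <;> linarith [hq.1, hq.2]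
    refine ⟨n + q, ?_⟩
    have hσq : σ (n + q) = a n + q * (a (n + 1) - a n) := by
      simp only [σ, Int.fract, hfloor, add_sub_cancel_left]
    rw [hσq, hq_def, div_mul_cancel₀ _ (hgap n).ne']
    ring
  exact ⟨StrictMono.orderIsoOfSurjective σ hmono hsurj, fun n => by simp [σ]⟩

lemma exists_orderIso_apply_le_add_two {M : ℝ ≃o ℝ} (hM : ∀ x, x < M x) :
    ∃ τ : ℝ ≃o ℝ, ∀ x, τ (M x) ≤ τ x + 2 := by
  obtain ⟨htop, hbot⟩ := M.tendsto_zpow_apply hM 0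
  obtain ⟨σ, hσ⟩ := exists_orderIso_intCast_eq (M.strictMono_zpow_apply hM 0) htop hbot
  refine ⟨σ.symm, fun x => ?_⟩
  set n := ⌊σ.symm x⌋
  have hx : x < (M ^ (n + 1)) 0 := by
    rw [← hσ, ← σ.symm_apply_lt]; push_cast; exact Int.lt_floor_add_one _
  have hMx : M x < σ ↑(n + 1 + 1) := by
    rw [hσ, M.zpow_add_one_apply]; exact M.strictMono hx
  rw [← σ.symm_apply_lt] at hMx
  push_cast at hMx
  linarith [Int.floor_le (σ.symm x)]

lemma OrderIso.exists_forall_apply_le {α ι : Type*} [LinearOrder α] [Fintype ι] [Nonempty ι]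
    (f : ι → α ≃o α) : ∃ M : α ≃o α, ∀ i x, f i x ≤ M x := by
  set M : α → α := fun x => Finset.univ.sup' Finset.univ_nonempty fun i => f i x
  have hle : ∀ i x, f i x ≤ M x := fun i x => Finset.le_sup' (fun i => f i x) (Finset.mem_univ i)
  have hmono : StrictMono M := fun x y hxy => by
    obtain ⟨i, -, hi⟩ := Finset.exists_mem_eq_sup' Finset.univ_nonempty fun i => f i x
    exact (hi ▸ (f i).strictMono hxy).trans_le (hle i y)
  have hsurj : Surjective M := fun y => by
    set x := Finset.univ.inf' Finset.univ_nonempty fun i => (f i).symm y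
    refine ⟨x, le_antisymm (Finset.sup'_le _ _ fun i _ => ?_) ?_⟩
    · exact (f i).le_symm_apply.mp (Finset.inf'_le _ (Finset.mem_univ i))
    · obtain ⟨i, -, hi⟩ := Finset.exists_mem_eq_inf' Finset.univ_nonempty fun i => (f i).symm y
      exact (f i).symm_apply_le.mp hi.ge |>.trans (hle i x)
  exact ⟨StrictMono.orderIsoOfSurjective M hmono hsurj, hle⟩

lemma MulAut.conj_orderIso_apply {α : Type*} [Preorder α] (τ g : α ≃o α) (x : α) :
    MulAut.conj τ g x = τ (g (τ.symm x)) :=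
  rfl

lemma exists_conj_abs_apply_sub_le_two {ι : Type*} [Fintype ι] (f : ι → H)
    (hsymm : ∀ i, ∃ j, f j = (f i)⁻¹) (hmov : ∀ x, ∃ i, x < f i x) :
    ∃ τ : H, ∀ i x, |MulAut.conj τ (f i) x - x| ≤ 2 := by
  have : Nonempty ι := (hmov 0).nonempty
  obtain ⟨M, hM⟩ := OrderIso.exists_forall_apply_le f
  obtain ⟨τ, hτ⟩ := exists_orderIso_apply_le_add_two fun x =>
    (hmov x).elim fun i hi => hi.trans_le (hM i x)
  have hup : ∀ i x, τ (f i x) ≤ τ x + 2 := fun i x => (τ.monotone (hM i x)).trans (hτ x)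
  refine ⟨τ, fun i x => ?_⟩
  obtain ⟨j, hj⟩ := hsymm i
  have hupper := hup i (τ.symm x)
  have hlower := hup j (f i (τ.symm x))
  simp only [hj, RelIso.inv_apply_self, OrderIso.apply_symm_apply] at hupper hlower
  rw [MulAut.conj_orderIso_apply, abs_le]
  constructor <;> linarith

lemma List.summable_comp_length {β : Type*} [Fintype β] {u : ℕ → ℝ} (hu : ∀ n, 0 ≤ u n)
    (h : Summable fun n => (Fintype.card β : ℝ) ^ n * u n) :
    Summable fun w : List β => u w.length := by
  change Summable ((fun p : Σ n, Fin n → β => u p.1) ∘ List.equivSigmaTuple)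
  rw [Equiv.summable_iff]
  refine (summable_sigma_of_nonneg fun p => hu p.1).mpr ⟨fun n => .of_finite, h.congr fun n => ?_⟩
  simp [nsmul_eq_mul]

lemma summable_pow_length_mul {ι : Type*} [Fintype ι] {r : ℝ} (hr0 : 0 ≤ r)
    (hr : Fintype.card ι * r < 1) (A B : ℝ) :
    Summable fun w : List ι => r ^ w.length * (A + B * w.length) := by
  have hgeom (k : ℕ) : Summable fun w : List ι => (w.length : ℝ) ^ k * r ^ w.length := by
    refine List.summable_comp_length (u := fun n => (n : ℝ) ^ k * r ^ n) (fun n => by positivity) ?_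
    have hnorm : ‖(Fintype.card ι : ℝ) * r‖ < 1 := by
      rwa [Real.norm_of_nonneg (by positivity)]
    simpa [mul_pow, mul_left_comm] using summable_pow_mul_geometric_of_norm_lt_one k hnorm
  refine (((hgeom 0).mul_left A).add ((hgeom 1).mul_left B)).congr fun w => ?_
  ring

lemma Monotone.lipschitzWith_of_sub_le {φ : ℝ → ℝ} (hφ : Monotone φ) {K : ℝ≥0}
    (h : ∀ x y, x ≤ y → φ y - φ x ≤ K * (y - x)) : LipschitzWith K φ := by
  refine LipschitzWith.of_le_add_mul K fun x y => ?_
  rcases le_total x y with hxy | hyx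
  · exact (hφ hxy).trans (le_add_of_nonneg_right (by positivity))
  · have := h y x hyx
    rw [Real.dist_eq, abs_of_nonneg (sub_nonneg.mpr hyx)]
    linarith

lemma Continuous.surjective_of_sub_le_sub {φ : ℝ → ℝ} (hφ : Continuous φ)
    (h : ∀ x y, x ≤ y → y - x ≤ φ y - φ x) : Surjective φ := by
  refine hφ.surjective (tendsto_atTop_mono' _ ?_ (tendsto_atTop_add_const_left _ (φ 0) tendsto_id))
    (tendsto_atBot_mono' _ ?_ (tendsto_atBot_add_const_left _ (φ 0) tendsto_id))
  · filter_upwards [eventually_ge_atTop 0] with x hx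
    simp only [id]
    linarith [h 0 x hx]
  · filter_upwards [eventually_le_atBot 0] with x hx
    simp only [id]
    linarith [h x 0 hx]

def lipschitzBoundedDisplacement : Submonoid H where
  carrier := {g | (∃ C : ℝ≥0, LipschitzWith C g) ∧ ∃ M : ℝ, ∀ x, |g x - x| ≤ M}
  mul_mem' := by
    rintro g h ⟨⟨C, hC⟩, M, hM⟩ ⟨⟨C', hC'⟩, M', hM'⟩
    refine ⟨⟨C * C', hC.comp hC'⟩, M + M', fun x => ?_⟩
    calc |g (h x) - x| ≤ |g (h x) - h x| + |h x - x| := abs_sub_le _ _ _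
      _ ≤ M + M' := add_le_add (hM _) (hM' _)
  one_mem' := ⟨⟨1, LipschitzWith.id⟩, 0, fun x => by simp⟩

section WeightedOrbitSum

variable {ι : Type*} (f : ι → H)

lemma abs_prod_map_apply_sub_le {K : ℝ} (hK : ∀ i x, |f i x - x| ≤ K) (w : List ι) (x : ℝ) :
    |(w.map f).prod x - x| ≤ K * w.length := by
  induction w with
  | nil => simp
  | cons i w ih =>
    simp only [List.map_cons, List.prod_cons, RelIso.mul_apply, List.length_cons]
    calc |f i ((w.map f).prod x) - x|
        ≤ |f i ((w.map f).prod x) - (w.map f).prod x| + |(w.map f).prod x - x| := abs_sub_le _ _ _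
      _ ≤ K * ↑(w.length + 1) := by push_cast; linarith [hK i ((w.map f).prod x)]

def weightedOrbitSum (r x : ℝ) : ℝ :=
  ∑' w : List ι, r ^ w.length * (w.map f).prod x

variable [Fintype ι] {K r : ℝ}

lemma summable_weightedOrbitSum (hK : ∀ i x, |f i x - x| ≤ K) (hr0 : 0 ≤ r)
    (hr : Fintype.card ι * r < 1) (x : ℝ) :
    Summable fun w : List ι => r ^ w.length * (w.map f).prod x := by
  refine (summable_pow_length_mul hr0 hr |x| K).of_norm_bounded fun w => ?_
  rw [Real.norm_eq_abs, abs_mul, abs_of_nonneg (by positivity)]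
  gcongr
  linarith [abs_sub_abs_le_abs_sub ((w.map f).prod x) x, abs_prod_map_apply_sub_le f hK w x]

lemma hasSum_weightedOrbitSum_sub (hK : ∀ i x, |f i x - x| ≤ K) (hr0 : 0 ≤ r)
    (hr : Fintype.card ι * r < 1) (x y : ℝ) :
    HasSum (fun w : List ι => r ^ w.length * ((w.map f).prod y - (w.map f).prod x))
      (weightedOrbitSum f r y - weightedOrbitSum f r x) := by
  have h := (summable_weightedOrbitSum f hK hr0 hr y).hasSum.sub
    (summable_weightedOrbitSum f hK hr0 hr x).hasSum
  simp only [← mul_sub] at h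
  exact h

lemma sub_le_weightedOrbitSum_sub (hK : ∀ i x, |f i x - x| ≤ K) (hr0 : 0 ≤ r)
    (hr : Fintype.card ι * r < 1) {x y : ℝ} (hxy : x ≤ y) :
    y - x ≤ weightedOrbitSum f r y - weightedOrbitSum f r x := by
  -- the empty word contributes `y - x`, and every other word a nonnegative amount
  rw [← (hasSum_weightedOrbitSum_sub f hK hr0 hr x y).tsum_eq]
  simpa using (hasSum_weightedOrbitSum_sub f hK hr0 hr x y).summable.le_tsum [] fun w _ =>
    mul_nonneg (by positivity) (sub_nonneg.mpr ((w.map f).prod.monotone hxy))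

lemma continuous_weightedOrbitSum (hK : ∀ i x, |f i x - x| ≤ K) (hr0 : 0 ≤ r)
    (hr : Fintype.card ι * r < 1) : Continuous (weightedOrbitSum f r) := by
  have hweights : Summable fun w : List ι => r ^ w.length := by
    simpa using summable_pow_length_mul hr0 hr 1 0
  set Z := ∑' w : List ι, r ^ w.length
  -- subtracting `Z * x` leaves a series of uniformly bounded continuous functions
  have hdisp : ∀ x, HasSum (fun w : List ι => r ^ w.length * ((w.map f).prod x - x))
      (weightedOrbitSum f r x - Z * x) := fun x => by
    have h := (summable_weightedOrbitSum f hK hr0 hr x).hasSum.sub (hweights.hasSum.mul_right x)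
    simp only [← mul_sub] at h
    exact h
  have hcont : Continuous fun x => weightedOrbitSum f r x - Z * x := by
    refine (continuous_tsum (fun w => ?_) (summable_pow_length_mul hr0 hr 0 K) fun w x => ?_).congr
      fun x => (hdisp x).tsum_eq
    · exact continuous_const.mul ((w.map f).prod.continuous.sub continuous_id)
    · rw [Real.norm_eq_abs, abs_mul, abs_of_nonneg (by positivity), zero_add]
      exact mul_le_mul_of_nonneg_left (abs_prod_map_apply_sub_le f hK w x) (by positivity)
  exact (hcont.add (continuous_const_mul Z)).congr fun x => sub_add_cancel _ _

lemma weightedOrbitSum_apply_sub_le (hK : ∀ i x, |f i x - x| ≤ K) (hr0 : 0 < r)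
    (hr : Fintype.card ι * r < 1) (i : ι) {x y : ℝ} (hxy : x ≤ y) :
    weightedOrbitSum f r (f i y) - weightedOrbitSum f r (f i x) ≤
      r⁻¹ * (weightedOrbitSum f r y - weightedOrbitSum f r x) := by
  have hsum := hasSum_weightedOrbitSum_sub f hK hr0.le hr x y
  set g := fun w : List ι => r ^ w.length * ((w.map f).prod y - (w.map f).prod x)
  -- the words ending in `i` form a subfamily of all words, reweighted by `r`
  have hterm : ∀ w : List ι, r ^ w.length * ((w.map f).prod (f i y) - (w.map f).prod (f i x)) =
      r⁻¹ * g (w ++ [i]) := fun w => by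
    simp only [g, List.map_append, List.prod_append, List.map_singleton, List.prod_singleton,
      RelIso.mul_apply, List.length_append, List.length_singleton, pow_succ]
    field_simp [hr0.ne']
  rw [← (hasSum_weightedOrbitSum_sub f hK hr0.le hr (f i x) (f i y)).tsum_eq, ← hsum.tsum_eq,
    tsum_congr hterm, tsum_mul_left]
  refine mul_le_mul_of_nonneg_left ?_ (inv_nonneg.mpr hr0.le)
  exact Summable.tsum_le_tsum_of_inj (· ++ [i]) (List.append_left_injective [i])
    (fun w _ => mul_nonneg (by positivity) (sub_nonneg.mpr ((w.map f).prod.monotone hxy)))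
    (fun w => le_rfl) (hsum.summable.comp_injective (List.append_left_injective [i])) hsum.summable

lemma abs_weightedOrbitSum_apply_sub_le (hK : ∀ i x, |f i x - x| ≤ K) (hr0 : 0 ≤ r)
    (hr : Fintype.card ι * r < 1) (i : ι) (x : ℝ) :
    |weightedOrbitSum f r (f i x) - weightedOrbitSum f r x| ≤
      ∑' w : List ι, r ^ w.length * (K + 2 * K * w.length) := by
  refine (hasSum_weightedOrbitSum_sub f hK hr0 hr x (f i x)).norm_le_of_bounded
    (summable_pow_length_mul hr0 hr K (2 * K)).hasSum fun w => ?_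
  rw [Real.norm_eq_abs, abs_mul, abs_of_nonneg (by positivity)]
  refine mul_le_mul_of_nonneg_left ?_ (by positivity)
  have h₁ := abs_prod_map_apply_sub_le f hK w (f i x)
  have h₂ := abs_prod_map_apply_sub_le f hK w x
  have h₃ := hK i x
  have h₄ := abs_sub_le ((w.map f).prod (f i x)) (f i x) ((w.map f).prod x)
  have h₅ := abs_sub_le (f i x) x ((w.map f).prod x)
  rw [abs_sub_comm x] at h₅
  linarith

end WeightedOrbitSum

theorem exists_conj_mem_lipschitzBoundedDisplacement {ι : Type*} [Fintype ι] (f : ι → H) {K : ℝ}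
    (hK : ∀ i x, |f i x - x| ≤ K) :
    ∃ D : H, ∀ i, MulAut.conj D (f i) ∈ lipschitzBoundedDisplacement := by
  set r : ℝ := ((Fintype.card ι : ℝ) + 1)⁻¹
  have hr0 : 0 < r := by positivity
  have hr : Fintype.card ι * r < 1 := by
    rw [← div_eq_mul_inv, div_lt_one (by positivity)]; linarith
  have hsub x y (hxy : x ≤ y) := sub_le_weightedOrbitSum_sub f hK hr0.le hr hxy
  have hmono : StrictMono (weightedOrbitSum f r) := fun x y hxy => by linarith [hsub x y hxy.le]
  set D := StrictMono.orderIsoOfSurjective _ hmono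
    ((continuous_weightedOrbitSum f hK hr0.le hr).surjective_of_sub_le_sub hsub)
  have hD : ∀ y, weightedOrbitSum f r (D.symm y) = y := D.apply_symm_apply
  refine ⟨D, fun i => ⟨⟨r⁻¹.toNNReal, ?_⟩,
    ∑' w : List ι, r ^ w.length * (K + 2 * K * w.length), fun x => ?_⟩⟩
  · refine (MulAut.conj D (f i)).monotone.lipschitzWith_of_sub_le fun x y hxy => ?_
    have := weightedOrbitSum_apply_sub_le f hK hr0 hr i (D.symm.monotone hxy)
    rw [hD, hD] at this
    rwa [Real.coe_toNNReal _ (inv_nonneg.mpr hr0.le)]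
  · have := abs_weightedOrbitSum_apply_sub_le f hK hr0.le hr i (D.symm x)
    rw [hD] at this
    exact this

lemma exists_mem_union_inv_lt_apply {S : Set H} {x : ℝ} (h : ∃ g ∈ Subgroup.closure S, g x ≠ x) :
    ∃ t ∈ S ∪ S⁻¹, x < t x := by
  obtain ⟨g, hg, hgx⟩ := h
  obtain ⟨s, hs, hsx⟩ : ∃ s ∈ S, s x ≠ x := by
    by_contra! hfix
    exact hgx ((Subgroup.closure_le (MulAction.stabilizer H x)).mpr hfix hg)
  rcases hsx.lt_or_gt with hlt | hgt
  · exact ⟨s⁻¹, Or.inr (by simpa using hs), by simpa using (s⁻¹).strictMono hlt⟩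
  · exact ⟨s, Or.inl hs, hgt⟩

/-- Every irreducible, finitely generated subgroup of Homeo⁺(ℝ) is
topologically conjugate to a group of Lipschitz homeomorphisms with uniformly bounded
displacement. -/
theorem conjugate_to_lipschitz_bounded_displacement
    (G : Subgroup H) (hfg : G.FG)
    (hirr : ∀ x : ℝ, ∃ g ∈ G, g x ≠ x) :
    ∃ D : ℝ ≃ₜ ℝ, ∀ g ∈ G,
      (∃ C : ℝ≥0, LipschitzWith C fun x : ℝ => D (g (D.symm x))) ∧
      ∃ M : ℝ, ∀ x : ℝ, |D (g (D.symm x)) - x| ≤ M := by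
  obtain ⟨S, rfl, hS⟩ := (Subgroup.fg_iff G).mp hfg
  have : Fintype ↥(S ∪ S⁻¹) := (hS.union hS.inv).fintype
  obtain ⟨τ, hτ⟩ := exists_conj_abs_apply_sub_le_two (Subtype.val : ↥(S ∪ S⁻¹) → H)
    (fun ⟨s, hs⟩ => ⟨⟨s⁻¹, hs.elim (fun h => Or.inr (by simpa using h)) Or.inl⟩, rfl⟩)
    (fun x => (exists_mem_union_inv_lt_apply (hirr x)).elim fun t ⟨ht, hlt⟩ => ⟨⟨t, ht⟩, hlt⟩)
  obtain ⟨D, hD⟩ := exists_conj_mem_lipschitzBoundedDisplacement _ hτ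
  have hconj : (Subgroup.closure S).toSubmonoid ≤
      lipschitzBoundedDisplacement.comap (MulAut.conj (D * τ)).toMonoidHom := by
    rw [Subgroup.closure_toSubmonoid, Submonoid.closure_le]
    intro t ht
    simpa using hD ⟨t, ht⟩
  exact ⟨(D * τ).toHomeomorph, fun g hg => hconj hg⟩
end
end
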